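/- arXiv:0707.3271 — 4 statements merged into one kernel-verified Lean document; each statement's English description precedes it below -/
import Mathlib

section
/- Let η ∈ c₀* with η₁ > 0, and suppose that either (a) r(η_a) ≍ log, i.e., there exist c, C > 0 with c·log n ≤ (η_{a²})_n/(η_a)_n ≤ C·log n for all n ≥ 2; or (b) η is regular, i.e., η_a = O(η). Then for every ξ ∈ c₀*: ξ_{a²} ≍ η_{a²} implies ξ_a ≍ η_a. (This is the second-order equality cancellation J_{a²} = I_{a²} ⟹ J_a = I_a for I the principal ideal (η).) -/
/-!
Sequences are indexed by `ℕ` starting at 0: entry `n` is the `(n+1)`-st term, so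
`log n` for `n ≥ 2` (1-based) becomes `Real.log (n+1)` for `n ≥ 1` (0-based).
-/

/-- `ξ ∈ c₀*`: nonnegative, nonincreasing, converging to 0. -/
def IsC0Star (ξ : ℕ → ℝ) : Prop :=
  (∀ n, 0 ≤ ξ n) ∧ (∀ n, ξ (n + 1) ≤ ξ n) ∧ Filter.Tendsto ξ Filter.atTop (nhds 0)

/-- The arithmetic mean `(ξ_a)_n = (1/n)∑_{j=1}^n ξ_j` (0-based indexing). -/
noncomputable def am (ξ : ℕ → ℝ) (n : ℕ) : ℝ :=
  (∑ j ∈ Finset.range (n + 1), ξ j) / (n + 1)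

/-- `ξ = O(η)`: `ξ_n ≤ C·η_n` for all `n`, for some `C > 0`. -/
def BigO (ξ η : ℕ → ℝ) : Prop :=
  ∃ C : ℝ, 0 < C ∧ ∀ n, ξ n ≤ C * η n

/-!
With `S f n = ∑_{j<n} f j` (`psum`) we have `(f_a)_n = S f (n+1)/(n+1)`, so `ξ_a ≍ η_a` means
`S ξ ≍ S η` and `ξ_{a²} ≍ η_{a²}` means `S ξ_a ≍ S η_a`. Everything rests on
`S f m · h ≤ S f_a M - S f_a m ≤ S f M · h`, where `h = ∑_{m ≤ k < M} 1/(k+1)` lies between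
`log ((M+1)/(m+1))` and `log (M/m)`.

(b) Regularity gives `S η_a ≤ K · S η`, hence `S ξ ≤ S ξ_a ≲ S η_a ≲ S η`, and also
`S η m ≤ (1 - 1/2K) · S η (2m)`. Iterating, `S ξ_a m ≤ S ξ_a N / 2` once `N ≥ 2^j m` for a
fixed large `j`; with `N < 2^(j+1) m` this yields `S ξ_a N ≤ 2(j+1) · S ξ N`, so
`S η ≤ S η_a ≲ S ξ_a ≲ S ξ`.

(a) Now `S η_a m ≍ log m · S η m`, so `log m · S η m ≲ S ξ_a m ≤ (1 + log m) · S ξ m`. For the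
converse compare `m` with `M = ⌊m^(1+c/2)⌋`: the two-sided log bound forces `S η M ≲ S η m`,
and `log m · S ξ m ≲ S ξ_a M ≲ log M · S η M ≲ log m · S η m`.
-/

open Finset Real Filter

noncomputable def psum (f : ℕ → ℝ) (n : ℕ) : ℝ := ∑ j ∈ range n, f j

section PartialSums

variable {f : ℕ → ℝ}

lemma am_eq_psum_div (f : ℕ → ℝ) (n : ℕ) : am f n = psum f (n + 1) / (n + 1) := rfl

@[simp] lemma psum_zero (f : ℕ → ℝ) : psum f 0 = 0 := by simp [psum]

@[simp] lemma psum_one (f : ℕ → ℝ) : psum f 1 = f 0 := by simp [psum]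

@[simp] lemma am_zero (f : ℕ → ℝ) : am f 0 = f 0 := by simp [am]

lemma psum_nonneg (hf : ∀ n, 0 ≤ f n) (n : ℕ) : 0 ≤ psum f n :=
  sum_nonneg fun j _ ↦ hf j

lemma psum_mono (hf : ∀ n, 0 ≤ f n) : Monotone (psum f) :=
  fun _ _ h ↦ sum_le_sum_of_subset_of_nonneg (range_mono h) fun j _ _ ↦ hf j

lemma am_nonneg (hf : ∀ n, 0 ≤ f n) (n : ℕ) : 0 ≤ am f n :=
  div_nonneg (psum_nonneg hf _) (by positivity)

lemma le_am (hf : Antitone f) (n : ℕ) : f n ≤ am f n := by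
  rw [am, le_div_iff₀ (by positivity)]
  calc f n * (n + 1) = ∑ _j ∈ range (n + 1), f n := by simp [mul_comm]
    _ ≤ ∑ j ∈ range (n + 1), f j :=
      sum_le_sum fun j hj ↦ hf (Nat.lt_succ_iff.mp (mem_range.mp hj))

lemma psum_le_psum_am (hf : Antitone f) (n : ℕ) : psum f n ≤ psum (am f) n :=
  sum_le_sum fun k _ ↦ le_am hf k

end PartialSums

lemma sum_Ico_inv_le_log_sub {m M : ℕ} (hm : 1 ≤ m) (hmM : m ≤ M) :
    ∑ k ∈ Ico m M, ((k : ℝ) + 1)⁻¹ ≤ log M - log m := by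
  have hm₀ : (0 : ℝ) < m := by exact_mod_cast hm
  have hM₀ : (0 : ℝ) < M := by exact_mod_cast hm.trans hmM
  have h := AntitoneOn.sum_le_integral_Ico hmM (inv_antitoneOn_Icc_right hm₀)
  rw [integral_inv (Set.notMem_uIcc_of_lt hm₀ hM₀), log_div hM₀.ne' hm₀.ne'] at h
  simpa using h

lemma log_sub_le_sum_Ico_inv {m M : ℕ} (hmM : m ≤ M) :
    log ((M : ℝ) + 1) - log ((m : ℝ) + 1) ≤ ∑ k ∈ Ico m M, ((k : ℝ) + 1)⁻¹ := by
  have hm₀ : (0 : ℝ) < (m + 1 : ℕ) := by positivity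
  have hM₀ : (0 : ℝ) < (M + 1 : ℕ) := by positivity
  have h := AntitoneOn.integral_le_sum_Ico (Nat.add_le_add_right hmM 1)
    (inv_antitoneOn_Icc_right hm₀)
  rw [integral_inv (Set.notMem_uIcc_of_lt hm₀ hM₀), log_div hM₀.ne' hm₀.ne',
    ← sum_Ico_add'] at h
  simpa using h

section Differences

variable {f : ℕ → ℝ} (hf : ∀ n, 0 ≤ f n)
include hf

lemma psum_am_sub_le {m M : ℕ} (hmM : m ≤ M) :
    psum (am f) M - psum (am f) m ≤ psum f M * ∑ k ∈ Ico m M, ((k : ℝ) + 1)⁻¹ := by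
  unfold psum
  rw [← sum_Ico_eq_sub _ hmM, mul_sum]
  gcongr with k hk
  rw [am_eq_psum_div, div_eq_mul_inv]
  gcongr
  exact psum_mono hf (mem_Ico.mp hk).2

lemma psum_mul_le_psum_am_sub {m M : ℕ} (hmM : m ≤ M) :
    psum f m * ∑ k ∈ Ico m M, ((k : ℝ) + 1)⁻¹ ≤ psum (am f) M - psum (am f) m := by
  unfold psum
  rw [← sum_Ico_eq_sub _ hmM, mul_sum]
  gcongr with k hk
  rw [am_eq_psum_div, div_eq_mul_inv]
  gcongr
  exact psum_mono hf (by have := (mem_Ico.mp hk).1; omega)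

lemma psum_am_le_mul_one_add_log (m : ℕ) : psum (am f) m ≤ psum f m * (1 + log m) := by
  rcases Nat.eq_zero_or_pos m with rfl | hm
  · simp
  have h := psum_am_sub_le hf (Nat.zero_le m)
  rw [sum_eq_sum_Ico_succ_bot hm] at h
  have hlog := sum_Ico_inv_le_log_sub le_rfl hm
  simp only [psum_zero, CharP.cast_eq_zero, zero_add, inv_one, Nat.cast_one, log_one,
    sub_zero] at h hlog
  nlinarith [psum_nonneg hf m]

end Differences

lemma bigO_am_iff {f g : ℕ → ℝ} : BigO (am f) (am g) ↔ BigO (psum f) (psum g) := by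
  refine ⟨fun ⟨C, hC, h⟩ ↦ ⟨C, hC, fun m ↦ ?_⟩, fun ⟨C, hC, h⟩ ↦ ⟨C, hC, fun n ↦ ?_⟩⟩
  · rcases m with _ | n
    · simp
    have := h n
    rwa [am_eq_psum_div, am_eq_psum_div, ← mul_div_assoc,
      div_le_div_iff_of_pos_right (by positivity)] at this
  · rw [am_eq_psum_div, am_eq_psum_div, ← mul_div_assoc]
    exact div_le_div_of_nonneg_right (h (n + 1)) (by positivity)

lemma bigO_psum_of_eventually_le {f g : ℕ → ℝ} (hf : ∀ n, 0 ≤ f n) (hg : ∀ n, 0 ≤ g n)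
    (hg₀ : 0 < g 0) (h : ∃ C, ∀ᶠ m in atTop, psum f m ≤ C * psum g m) :
    BigO (psum f) (psum g) := by
  obtain ⟨C, hC⟩ := h
  obtain ⟨N, hN⟩ := eventually_atTop.mp hC
  set D := max (max C 1) (psum f N / g 0)
  have hCD : C ≤ D := (le_max_left _ _).trans (le_max_left _ _)
  have hD : 0 < D := zero_lt_one.trans_le ((le_max_right _ _).trans (le_max_left _ _))
  refine ⟨D, hD, fun m ↦ ?_⟩
  rcases Nat.eq_zero_or_pos m with rfl | hm
  · simp
  rcases le_total N m with hNm | hmN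
  · exact (hN m hNm).trans (by gcongr; exact psum_nonneg hg m)
  calc psum f m ≤ psum f N := psum_mono hf hmN
    _ = psum f N / g 0 * psum g 1 := by rw [psum_one, div_mul_cancel₀ _ hg₀.ne']
    _ ≤ D * psum g m := by
      gcongr
      · exact psum_nonneg hg 1
      · exact le_max_right _ _
      · exact psum_mono hg hm

section Regular

variable {η : ℕ → ℝ} {K : ℝ} (hη : Antitone η) (hreg : ∀ n, am η n ≤ K * η n)
include hreg

lemma psum_am_le_of_regular (m : ℕ) : psum (am η) m ≤ K * psum η m := by
  rw [psum, psum, mul_sum]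
  exact sum_le_sum fun k _ ↦ hreg k

include hη

/-- The second half of `S η (2m)` is at least `m · η (2m-1) ≥ S η (2m) / 2K`. -/
lemma psum_le_mul_psum_two_mul (hK : 0 < K) (m : ℕ) :
    psum η m ≤ (1 - (2 * K)⁻¹) * psum η (2 * m) := by
  rcases m with _ | n
  · simp
  have hsplit : psum η (2 * (n + 1)) = psum η (n + 1) + ∑ j ∈ Ico (n + 1) (2 * n + 2), η j :=
    (sum_range_add_sum_Ico η (by omega)).symm
  have htail : (n + 1) * η (2 * n + 1) ≤ ∑ j ∈ Ico (n + 1) (2 * n + 2), η j := by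
    have h := card_nsmul_le_sum (Ico (n + 1) (2 * n + 2)) η (η (2 * n + 1))
      fun j hj ↦ hη (by have := (mem_Ico.mp hj).2; omega)
    rwa [Nat.card_Ico, show 2 * n + 2 - (n + 1) = n + 1 by omega, nsmul_eq_mul,
      Nat.cast_succ] at h
  have hdouble : psum η (2 * (n + 1)) ≤ K * (2 * (n + 1)) * η (2 * n + 1) := by
    have := hreg (2 * n + 1)
    rw [am_eq_psum_div, div_le_iff₀ (by positivity)] at this
    push_cast at this
    rw [show 2 * (n + 1) = 2 * n + 1 + 1 by ring]
    linarith
  have : psum η (2 * (n + 1)) * (2 * K)⁻¹ ≤ (n + 1) * η (2 * n + 1) := by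
    rw [← div_eq_mul_inv, div_le_iff₀ (by positivity)]
    linarith
  linarith

lemma psum_le_pow_mul_psum (hη₀ : ∀ n, 0 ≤ η n) (hK : 1 ≤ K) (j : ℕ) {m N : ℕ}
    (hN : 2 ^ j * m ≤ N) : psum η m ≤ (1 - (2 * K)⁻¹) ^ j * psum η N := by
  have : (2 * K)⁻¹ ≤ 1 := inv_le_one_of_one_le₀ (by linarith)
  have hiter : ∀ j : ℕ, psum η m ≤ (1 - (2 * K)⁻¹) ^ j * psum η (2 ^ j * m) := by
    intro j
    induction j with
    | zero => simp
    | succ j ih =>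
      calc psum η m ≤ (1 - (2 * K)⁻¹) ^ j * psum η (2 ^ j * m) := ih
        _ ≤ (1 - (2 * K)⁻¹) ^ j * ((1 - (2 * K)⁻¹) * psum η (2 * (2 ^ j * m))) := by
          gcongr
          exact psum_le_mul_psum_two_mul hη hreg (by linarith) _
        _ = (1 - (2 * K)⁻¹) ^ (j + 1) * psum η (2 ^ (j + 1) * m) := by ring_nf
  calc psum η m ≤ (1 - (2 * K)⁻¹) ^ j * psum η (2 ^ j * m) := hiter j
    _ ≤ (1 - (2 * K)⁻¹) ^ j * psum η N := by gcongr; exact psum_mono hη₀ hN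

variable {ξ : ℕ → ℝ} {C₁ C₂ : ℝ} (hC₁ : 0 < C₁) (hC₂ : 0 < C₂)
  (hT₁ : ∀ m, psum (am ξ) m ≤ C₁ * psum (am η) m) (hT₂ : ∀ m, psum (am η) m ≤ C₂ * psum (am ξ) m)
include hC₁ hC₂ hT₁ hT₂

lemma exists_two_mul_psum_am_le (hη₀ : ∀ n, 0 ≤ η n) (hK : 1 ≤ K) :
    ∃ j : ℕ, ∀ m N, 2 ^ j * m ≤ N → 2 * psum (am ξ) m ≤ psum (am ξ) N := by
  have hrate : 1 - (2 * K)⁻¹ < 1 := by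
    have : 0 < (2 * K)⁻¹ := by positivity
    linarith
  obtain ⟨j, hj⟩ := exists_pow_lt_of_lt_one (show 0 < (2 * C₁ * C₂ * K)⁻¹ by positivity) hrate
  refine ⟨j, fun m N hN ↦ ?_⟩
  calc 2 * psum (am ξ) m ≤ 2 * C₁ * K * psum η m := by
        nlinarith [hT₁ m, psum_am_le_of_regular hreg m]
    _ ≤ 2 * C₁ * K * ((1 - (2 * K)⁻¹) ^ j * psum η N) := by
        gcongr; exact psum_le_pow_mul_psum hη hreg hη₀ hK j hN
    _ ≤ 2 * C₁ * K * ((2 * C₁ * C₂ * K)⁻¹ * psum η N) := by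
        gcongr; exact psum_nonneg hη₀ N
    _ = C₂⁻¹ * psum η N := by field_simp
    _ ≤ psum (am ξ) N := by
        rw [inv_mul_le_iff₀ hC₂]; exact (psum_le_psum_am hη N).trans (hT₂ N)

lemma eventually_psum_le_of_regular (hη₀ : ∀ n, 0 ≤ η n) (hξ₀ : ∀ n, 0 ≤ ξ n) (hK : 1 ≤ K) :
    ∃ C, ∀ᶠ N in atTop, psum η N ≤ C * psum ξ N := by
  obtain ⟨j, hj⟩ := exists_two_mul_psum_am_le hη hreg hC₁ hC₂ hT₁ hT₂ hη₀ hK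
  refine ⟨2 * C₂ * (j + 1), ?_⟩
  filter_upwards [eventually_ge_atTop (2 ^ j)] with N hN
  set m := N / 2 ^ j
  have hm : 1 ≤ m := (Nat.one_le_div_iff (by positivity)).mpr hN
  have hmN : 2 ^ j * m ≤ N := Nat.mul_div_le N (2 ^ j)
  have hNm : N ≤ 2 ^ (j + 1) * m :=
    calc N ≤ 2 ^ j * (m + 1) := (Nat.lt_mul_div_succ N (by positivity)).le
      _ ≤ 2 ^ j * (2 * m) := Nat.mul_le_mul_left _ (by omega)
      _ = 2 ^ (j + 1) * m := by ring
  have hlog : log N - log m ≤ j + 1 := by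
    have hm₀ : (0 : ℝ) < m := by exact_mod_cast hm
    have : log N ≤ ((j + 1 : ℕ) : ℝ) * log 2 + log m := by
      rw [← log_pow, ← log_mul (by positivity) hm₀.ne']
      exact log_le_log (by exact_mod_cast Nat.one_le_two_pow.trans hN) (by exact_mod_cast hNm)
    push_cast at this
    nlinarith [log_two_lt_d9]
  have hsum := (sum_Ico_inv_le_log_sub hm (Nat.div_le_self N _)).trans hlog
  have hdiff := psum_am_sub_le hξ₀ (Nat.div_le_self N (2 ^ j))
  have hS := psum_nonneg hξ₀ N
  calc psum η N ≤ C₂ * psum (am ξ) N := (psum_le_psum_am hη N).trans (hT₂ N)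
    _ ≤ C₂ * (2 * (psum ξ N * (j + 1))) := by
        gcongr
        nlinarith [hj m N hmN, mul_le_mul_of_nonneg_left hsum hS]
    _ = 2 * C₂ * (j + 1) * psum ξ N := by ring

lemma bigO_psum_of_regular (hη₀ : ∀ n, 0 ≤ η n) (hξ₀ : ∀ n, 0 ≤ ξ n) (hξ : Antitone ξ)
    (hξpos : 0 < ξ 0) (hK : 1 ≤ K) : BigO (psum ξ) (psum η) ∧ BigO (psum η) (psum ξ) := by
  refine ⟨⟨C₁ * K, by positivity, fun m ↦ ?_⟩, bigO_psum_of_eventually_le hη₀ hξ₀ hξpos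
    (eventually_psum_le_of_regular hη hreg hC₁ hC₂ hT₁ hT₂ hη₀ hξ₀ hK)⟩
  calc psum ξ m ≤ C₁ * psum (am η) m := (psum_le_psum_am hξ m).trans (hT₁ m)
    _ ≤ C₁ * (K * psum η m) := by gcongr; exact psum_am_le_of_regular hreg m
    _ = C₁ * K * psum η m := by ring

end Regular

section FloorRpow

variable {m : ℕ} (hm : 1 ≤ m) {k : ℝ}
include hm

lemma le_floor_rpow (hk : 1 ≤ k) : m ≤ ⌊(m : ℝ) ^ k⌋₊ :=
  Nat.le_floor (Real.self_le_rpow_of_one_le (by exact_mod_cast hm) hk)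

lemma log_floor_rpow_le (hk : 1 ≤ k) : log ⌊(m : ℝ) ^ k⌋₊ ≤ k * log m := by
  rw [← log_rpow (by exact_mod_cast hm)]
  exact log_le_log (by exact_mod_cast hm.trans (le_floor_rpow hm hk))
    (Nat.floor_le (by positivity))

lemma mul_log_lt_log_floor_rpow_add_one (k : ℝ) : k * log m < log (⌊(m : ℝ) ^ k⌋₊ + 1) := by
  rw [← log_rpow (by exact_mod_cast hm)]
  exact log_lt_log (rpow_pos_of_pos (by exact_mod_cast hm) k) (Nat.lt_floor_add_one _)

end FloorRpow

section LogRatio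

variable {η ξ : ℕ → ℝ} {c C : ℝ} (hη₀ : ∀ n, 0 ≤ η n)
  (hlow : ∀ m : ℕ, 2 ≤ m → c * log m * psum η m ≤ psum (am η) m)
  (hup : ∀ m : ℕ, 2 ≤ m → psum (am η) m ≤ C * log m * psum η m)

include hη₀ hlow hup in
lemma sub_log_mul_psum_le {m M : ℕ} (hm : 2 ≤ m) (hmM : m ≤ M) :
    (log m - (1 - c) * log M) * psum η M ≤ C * log m * psum η m := by
  have hsum := mul_le_mul_of_nonneg_left (sum_Ico_inv_le_log_sub (by omega) hmM)
    (psum_nonneg hη₀ M)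
  linarith [hlow M (hm.trans hmM), hup m hm, psum_am_sub_le hη₀ hmM]

include hη₀ hlow hup in
lemma psum_floor_rpow_le (hc : 0 < c) {m : ℕ} (hm : 2 ≤ m) :
    psum η ⌊(m : ℝ) ^ (1 + c / 2)⌋₊ ≤ 2 * C / c * psum η m := by
  set M := ⌊(m : ℝ) ^ (1 + c / 2)⌋₊
  have hmM : m ≤ M := le_floor_rpow (by omega) (by linarith)
  have hlogm : 0 < log m := log_pos (by exact_mod_cast hm)
  have hlogM : log M ≤ (1 + c / 2) * log m := log_floor_rpow_le (by omega) (by linarith)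
  have hlogmM : log m ≤ log M := log_le_log (by positivity) (by exact_mod_cast hmM)
  have hgap : c / 2 * log m ≤ log m - (1 - c) * log M := by
    rcases le_total c 1 with hc1 | hc1
    · nlinarith [mul_le_mul_of_nonneg_left hlogM (by linarith : (0 : ℝ) ≤ 1 - c)]
    · nlinarith [mul_le_mul_of_nonneg_left hlogmM (by linarith : (0 : ℝ) ≤ c - 1)]
  have key : c / 2 * log m * psum η M ≤ C * log m * psum η m :=
    (mul_le_mul_of_nonneg_right hgap (psum_nonneg hη₀ M)).trans
      (sub_log_mul_psum_le hη₀ hlow hup hm hmM)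
  rw [div_mul_eq_mul_div, le_div_iff₀ hc]
  nlinarith

variable {C₁ C₂ : ℝ} (hT₁ : ∀ m, psum (am ξ) m ≤ C₁ * psum (am η) m)
  (hT₂ : ∀ m, psum (am η) m ≤ C₂ * psum (am ξ) m)

include hη₀ hlow hup hT₁ in
lemma eventually_psum_le_of_log_ratio (hξ₀ : ∀ n, 0 ≤ ξ n) (hc : 0 < c) (hC : 0 < C)
    (hC₁ : 0 < C₁) : ∃ D, ∀ᶠ m in atTop, psum ξ m ≤ D * psum η m := by
  set B := C₁ * C * (1 + c / 2) * (2 * C / c)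
  refine ⟨4 / c * B, ?_⟩
  have hlog : Tendsto (fun m : ℕ ↦ log m) atTop atTop :=
    tendsto_log_atTop.comp tendsto_natCast_atTop_atTop
  filter_upwards [eventually_ge_atTop 2, hlog.eventually_ge_atTop (4 * log 2 / c)]
    with m hm hlogm
  set M := ⌊(m : ℝ) ^ (1 + c / 2)⌋₊
  have hmM : m ≤ M := le_floor_rpow (by omega) (by linarith)
  have hlogm₀ : 0 < log m := lt_of_lt_of_le (by positivity [log_pos one_lt_two]) hlogm
  have hgap : c / 4 * log m ≤ ∑ i ∈ Ico m M, ((i : ℝ) + 1)⁻¹ := by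
    have hm₀ : (1 : ℝ) ≤ m := by exact_mod_cast (by omega : 1 ≤ m)
    have hlog_succ : log ((m : ℝ) + 1) ≤ log 2 + log m := by
      rw [← log_mul two_ne_zero (by positivity)]
      exact log_le_log (by positivity) (by linarith)
    rw [div_le_iff₀ hc] at hlogm
    linarith [log_sub_le_sum_Ico_inv hmM, mul_log_lt_log_floor_rpow_add_one (by omega : 1 ≤ m)
      (1 + c / 2)]
  have key : c / 4 * psum ξ m * log m ≤ B * psum η m * log m := by
    calc c / 4 * psum ξ m * log m ≤ psum ξ m * ∑ i ∈ Ico m M, ((i : ℝ) + 1)⁻¹ := by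
          nlinarith [mul_le_mul_of_nonneg_left hgap (psum_nonneg hξ₀ m)]
      _ ≤ psum (am ξ) M := by
          linarith [psum_mul_le_psum_am_sub hξ₀ hmM, psum_nonneg (am_nonneg hξ₀) m]
      _ ≤ C₁ * (C * log M * psum η M) := (hT₁ M).trans (by gcongr; exact hup M (hm.trans hmM))
      _ ≤ C₁ * (C * ((1 + c / 2) * log m) * (2 * C / c * psum η m)) := by
          have hlogM : C * log M ≤ C * ((1 + c / 2) * log m) := by
            gcongr; exact log_floor_rpow_le (by omega) (by linarith)
          gcongr C₁ * ?_
          exact mul_le_mul hlogM (psum_floor_rpow_le hη₀ hlow hup hc hm) (psum_nonneg hη₀ M)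
            (by positivity)
      _ = B * psum η m * log m := by ring
  have := le_of_mul_le_mul_right key hlogm₀
  calc psum ξ m = 4 / c * (c / 4 * psum ξ m) := by field_simp
    _ ≤ 4 / c * (B * psum η m) := by gcongr
    _ = 4 / c * B * psum η m := by ring

include hlow hT₂ in
lemma eventually_psum_le_of_log_lower (hξ₀ : ∀ n, 0 ≤ ξ n) (hc : 0 < c) (hC₂ : 0 < C₂) :
    ∃ D, ∀ᶠ m in atTop, psum η m ≤ D * psum ξ m := by
  refine ⟨3 * C₂ / c, ?_⟩
  filter_upwards [eventually_ge_atTop 2] with m hm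
  have hlog2 : log 2 ≤ log m := log_le_log (by norm_num) (by exact_mod_cast hm)
  have hlogm : 0 < log m := by linarith [log_two_gt_d9]
  have hS := psum_nonneg hξ₀ m
  have key : c * log m * psum η m ≤ 3 * C₂ * log m * psum ξ m := by
    calc c * log m * psum η m ≤ C₂ * psum (am ξ) m := (hlow m hm).trans (hT₂ m)
      _ ≤ C₂ * (psum ξ m * (1 + log m)) := by gcongr; exact psum_am_le_mul_one_add_log hξ₀ m
      _ ≤ C₂ * (psum ξ m * (3 * log m)) := by gcongr; linarith [log_two_gt_d9]
      _ = 3 * C₂ * log m * psum ξ m := by ring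
  rw [div_mul_eq_mul_div, le_div_iff₀ hc]
  nlinarith

include hη₀ hlow hup hT₁ hT₂ in
lemma bigO_psum_of_log_ratio (hξ₀ : ∀ n, 0 ≤ ξ n) (hpos : 0 < η 0) (hξpos : 0 < ξ 0)
    (hc : 0 < c) (hC : 0 < C) (hC₁ : 0 < C₁) (hC₂ : 0 < C₂) :
    BigO (psum ξ) (psum η) ∧ BigO (psum η) (psum ξ) :=
  ⟨bigO_psum_of_eventually_le hξ₀ hη₀ hpos
      (eventually_psum_le_of_log_ratio hη₀ hlow hup hT₁ hξ₀ hc hC hC₁),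
    bigO_psum_of_eventually_le hη₀ hξ₀ hξpos
      (eventually_psum_le_of_log_lower hlow hT₂ hξ₀ hc hC₂)⟩

end LogRatio

lemma psum_am_log_bounds_of_ratio {η : ℕ → ℝ} {c C : ℝ} (hη₀ : ∀ n, 0 ≤ η n) (hpos : 0 < η 0)
    (h : ∀ n : ℕ, 1 ≤ n →
      c * log (n + 1) ≤ am (am η) n / am η n ∧ am (am η) n / am η n ≤ C * log (n + 1))
    (m : ℕ) (hm : 2 ≤ m) :
    c * log m * psum η m ≤ psum (am η) m ∧ psum (am η) m ≤ C * log m * psum η m := by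
  obtain ⟨n, rfl⟩ : ∃ n, m = n + 1 := ⟨m - 1, by omega⟩
  have hS : 0 < psum η (n + 1) :=
    hpos.trans_le ((psum_one η).symm.trans_le (psum_mono hη₀ (by omega)))
  have hratio : am (am η) n / am η n = psum (am η) (n + 1) / psum η (n + 1) :=
    div_div_div_cancel_right₀ (by positivity) _ _
  obtain ⟨hlow, hup⟩ := h n (by omega)
  rw [hratio] at hlow hup
  push_cast
  exact ⟨(le_div_iff₀ hS).mp hlow, (div_le_iff₀ hS).mp hup⟩

theorem stmt_12 (η : ℕ → ℝ) (hη : IsC0Star η) (hpos : 0 < η 0)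
    (hcond :
      (∃ c C : ℝ, 0 < c ∧ 0 < C ∧ ∀ n : ℕ, 1 ≤ n →
        c * Real.log (n + 1) ≤ am (am η) n / am η n ∧
        am (am η) n / am η n ≤ C * Real.log (n + 1)) ∨
      BigO (am η) η) :
    ∀ ξ : ℕ → ℝ, IsC0Star ξ →
      (BigO (am (am ξ)) (am (am η)) ∧ BigO (am (am η)) (am (am ξ))) →
      (BigO (am ξ) (am η) ∧ BigO (am η) (am ξ)) := by
  obtain ⟨hη₀, hη, -⟩ := hη
  rintro ξ ⟨hξ₀, hξ, -⟩ ⟨h₁, h₂⟩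
  obtain ⟨C₁, hC₁, hT₁⟩ := bigO_am_iff.mp h₁
  obtain ⟨C₂, hC₂, hT₂⟩ := bigO_am_iff.mp h₂
  have hξpos : 0 < ξ 0 := by
    have := hT₂ 1
    rw [psum_one, psum_one, am_zero, am_zero] at this
    exact pos_of_mul_pos_right (hpos.trans_le this) hC₂.le
  rw [bigO_am_iff, bigO_am_iff]
  rcases hcond with ⟨c, C, hc, hC, hratio⟩ | ⟨K, -, hreg⟩
  · have hbounds := psum_am_log_bounds_of_ratio hη₀ hpos hratio
    exact bigO_psum_of_log_ratio hη₀ (fun m hm ↦ (hbounds m hm).1) (fun m hm ↦ (hbounds m hm).2)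
      hT₁ hT₂ hξ₀ hpos hξpos hc hC hC₁ hC₂
  · have hK : 1 ≤ K := by
      have := hreg 0
      rw [am_zero] at this
      exact (le_mul_iff_one_le_left hpos).mp this
    exact bigO_psum_of_regular (antitone_nat_of_succ_le hη) hreg hC₁ hC₂ hT₁ hT₂ hη₀ hξ₀
      (antitone_nat_of_succ_le hξ) hξpos hK
end

section
/- Let ξ, η ∈ c₀* with ξ ≺ η. Then the following conditions are equivalent: (i) for every m ∈ ℕ, the set {∑_{j=1}^n (η_j − ξ_j) : n ≥ m} attains a minimum (i.e., has a least element that is achieved); (ii) there exists ζ ∈ c₀* with ξ ≺_b ζ and ζ_n ≤ η_n for all n; (iii) there exists ρ ∈ c₀* with ξ_n ≤ ρ_n for all n and ρ ≺_b η. -/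
/-- `ξ ≺ η`: majorization, `∑_{j=1}^n ξ_j ≤ ∑_{j=1}^n η_j` for every `n`. -/
def Maj (ξ η : ℕ → ℝ) : Prop :=
  ∀ n : ℕ, ∑ j ∈ Finset.range n, ξ j ≤ ∑ j ∈ Finset.range n, η j

/-- `ξ ≺_b η`: block majorization, `ξ ≺ η` with equality of partial sums along a
strictly increasing sequence of indices tending to infinity. -/
def MajB (ξ η : ℕ → ℝ) : Prop :=
  Maj ξ η ∧ ∃ φ : ℕ → ℕ, StrictMono φ ∧
    ∀ k, ∑ j ∈ Finset.range (φ k + 1), ξ j = ∑ j ∈ Finset.range (φ k + 1), η j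

/-!
Write `δ n = ∑_{j<n} (η j - ξ j) ≥ 0`. If `ξ ≺_b ζ ≤ η` or `ξ ≤ ρ ≺_b η`, then `δ` is a
nondecreasing sequence plus a nonnegative one vanishing infinitely often, so every tail of `δ`
attains its minimum.

Conversely, suppose it does. Successive tail minimizers `q k` of `δ` cut `ℕ` into blocks on which
the partial sums of `ξ` are dominated by those of `η` from the left end of the block, and those of
`η` by those of `ξ` from the right end; raising `ξ` on the `k`-th block to `max ξ d_k`, with `d_k`
chosen to match the block sum of `η`, gives `ρ`. For `ζ`, cap `η` instead: from a position `p`,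
take the least `c` such that `∑_{p ≤ j < m} ξ j ≤ ∑_{p ≤ j < m} min (η j) c` for all `m`. One of
these inequalities with `m > p` must be an equality, since otherwise, `δ` attaining its tail
minima and `η → 0`, the cap could be lowered a little. That `m` ends a block, and iterating with
the (decreasing) caps gives `ζ = min η c_k` blockwise.
-/

open Finset Filter Topology

def AttainsTailMin {α : Type*} [LinearOrder α] (f : ℕ → α) : Prop :=
  ∀ m, ∃ n, m ≤ n ∧ ∀ n', m ≤ n' → f n ≤ f n'

section AttainsTailMin

variable {α : Type*} [LinearOrder α]

theorem attainsTailMin_of_forall_exists_le {f : ℕ → α}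
    (h : ∀ m, ∃ N, m ≤ N ∧ ∀ n, N ≤ n → f N ≤ f n) : AttainsTailMin f := by
  intro m
  obtain ⟨N, hmN, hN⟩ := h m
  obtain ⟨n, hn, hmin⟩ := (Icc m N).exists_min_image f (nonempty_Icc.2 hmN)
  refine ⟨n, (mem_Icc.1 hn).1, fun n' hn' => ?_⟩
  rcases le_total n' N with h' | h'
  · exact hmin n' (mem_Icc.2 ⟨hn', h'⟩)
  · exact (hmin N (mem_Icc.2 ⟨hmN, le_rfl⟩)).trans (hN n' h')

theorem AttainsTailMin.exists_blocks {f : ℕ → α} (hf : AttainsTailMin f)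
    (h0 : ∀ m, f 0 ≤ f m) :
    ∃ q : ℕ → ℕ, StrictMono q ∧ q 0 = 0 ∧ (∀ k m, q k ≤ m → f (q k) ≤ f m) ∧
      ∀ k m, q k < m → f (q (k + 1)) ≤ f m := by
  choose g hg_ge hg_min using hf
  set q : ℕ → ℕ := fun k => (fun p => g (p + 1))^[k] 0
  have hq_succ : ∀ k, q (k + 1) = g (q k + 1) := fun k =>
    Function.iterate_succ_apply' _ _ _
  have htail : ∀ k m, q k < m → f (q (k + 1)) ≤ f m := fun k m hm =>
    hq_succ k ▸ hg_min _ m hm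
  refine ⟨q, strictMono_nat_of_lt_succ fun k => ?_, rfl, fun k m hm => ?_, htail⟩
  · rw [hq_succ]
    exact hg_ge _
  · cases k with
    | zero => exact h0 m
    | succ k => exact htail k m (lt_of_lt_of_le (hq_succ k ▸ hg_ge _) hm)

variable {M : Type*} [AddCommMonoid M] [LinearOrder M] [IsOrderedAddMonoid M]

theorem attainsTailMin_add_of_monotone {A B : ℕ → M} (hA : Monotone A) (hB : 0 ≤ B)
    (hB0 : ∀ m, ∃ N, m ≤ N ∧ B N = 0) : AttainsTailMin (A + B) := by
  refine attainsTailMin_of_forall_exists_le fun m => ?_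
  obtain ⟨N, hmN, hBN⟩ := hB0 m
  refine ⟨N, hmN, fun n hn => ?_⟩
  calc A N + B N = A N := by rw [hBN, add_zero]
    _ ≤ A n := hA hn
    _ ≤ A n + B n := le_add_of_nonneg_right (hB n)

theorem AttainsTailMin.of_eq_add_const {f g : ℕ → M} (hf : AttainsTailMin f) (J : ℕ) (C : M)
    (h : ∀ m, J ≤ m → g m = f m + C) : AttainsTailMin g := by
  refine attainsTailMin_of_forall_exists_le fun m => ?_
  obtain ⟨N, hN, hmin⟩ := hf (max m J)
  refine ⟨N, le_of_max_le_left hN, fun n hn => ?_⟩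
  rw [h N (le_of_max_le_right hN), h n (le_of_max_le_right (hN.trans hn))]
  exact add_le_add_left (hmin n (hN.trans hn)) C

end AttainsTailMin

section Blocks

variable {q : ℕ → ℕ}

def blockIndex (q : ℕ → ℕ) (j : ℕ) : ℕ := Nat.findGreatest (fun k => q k ≤ j) j

theorem le_blockIndex (hq : StrictMono q) {k j : ℕ} (h : q k ≤ j) : k ≤ blockIndex q j :=
  Nat.le_findGreatest (hq.le_apply.trans h) h

theorem apply_blockIndex_le (hq0 : q 0 = 0) (j : ℕ) : q (blockIndex q j) ≤ j :=
  Nat.findGreatest_spec (P := fun k => q k ≤ j) (Nat.zero_le j) (by simp [hq0])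

theorem lt_apply_blockIndex_succ (hq : StrictMono q) (j : ℕ) : j < q (blockIndex q j + 1) := by
  by_contra! h
  exact (le_blockIndex hq h).not_gt (Nat.lt_succ_self _)

theorem blockIndex_eq (hq : StrictMono q) (hq0 : q 0 = 0) {k j : ℕ} (h₁ : q k ≤ j)
    (h₂ : j < q (k + 1)) : blockIndex q j = k := by
  have : blockIndex q j < k + 1 := hq.lt_iff_lt.1 ((apply_blockIndex_le hq0 j).trans_lt h₂)
  have := le_blockIndex hq h₁
  omega

variable {α : Type*}

def glueBlocks (q : ℕ → ℕ) (F : ℕ → ℕ → α) (j : ℕ) : α := F (blockIndex q j) j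

theorem glueBlocks_apply (hq : StrictMono q) (hq0 : q 0 = 0) (F : ℕ → ℕ → α) {k j : ℕ}
    (h₁ : q k ≤ j) (h₂ : j < q (k + 1)) : glueBlocks q F j = F k j := by
  rw [glueBlocks, blockIndex_eq hq hq0 h₁ h₂]

theorem sum_Ico_glueBlocks [AddCommMonoid α] (hq : StrictMono q) (hq0 : q 0 = 0)
    (F : ℕ → ℕ → α) {k m : ℕ} (hm : m ≤ q (k + 1)) :
    ∑ j ∈ Ico (q k) m, glueBlocks q F j = ∑ j ∈ Ico (q k) m, F k j :=
  sum_congr rfl fun _ hj =>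
    glueBlocks_apply hq hq0 F (mem_Ico.1 hj).1 ((mem_Ico.1 hj).2.trans_le hm)

theorem antitone_glueBlocks [Preorder α] (hq : StrictMono q) (hq0 : q 0 = 0)
    {F : ℕ → ℕ → α} (hF : ∀ k, Antitone (F k))
    (hF_succ : ∀ k, F (k + 1) (q (k + 1)) ≤ F k (q (k + 1) - 1)) :
    Antitone (glueBlocks q F) := by
  refine antitone_nat_of_succ_le fun j => ?_
  set k := blockIndex q j
  have h₁ : q k ≤ j := apply_blockIndex_le hq0 j
  have h₂ : j < q (k + 1) := lt_apply_blockIndex_succ hq j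
  rw [glueBlocks_apply hq hq0 F h₁ h₂]
  rcases (Nat.succ_le_of_lt h₂).lt_or_eq with h₃ | h₃
  · rw [glueBlocks_apply hq hq0 F (h₁.trans j.le_succ) h₃]
    exact hF k j.le_succ
  · have h₄ : j + 1 < q (k + 1 + 1) := h₃.trans_lt (hq (Nat.lt_succ_self _))
    rw [glueBlocks_apply hq hq0 F h₃.ge h₄, h₃]
    simpa [← h₃] using hF_succ k

end Blocks

theorem sum_range_eq_of_sum_Ico_eq {q : ℕ → ℕ} (hq : Monotone q) (hq0 : q 0 = 0) {a b : ℕ → ℝ}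
    (hblock : ∀ k, ∑ j ∈ Ico (q k) (q (k + 1)), a j = ∑ j ∈ Ico (q k) (q (k + 1)), b j)
    (k : ℕ) : ∑ j ∈ range (q k), a j = ∑ j ∈ range (q k), b j := by
  induction k with
  | zero => simp [hq0]
  | succ k ih =>
    rw [← sum_range_add_sum_Ico a (hq k.le_succ), ← sum_range_add_sum_Ico b (hq k.le_succ), ih,
      hblock k]

theorem majB_of_blocks {q : ℕ → ℕ} (hq : StrictMono q) (hq0 : q 0 = 0) {a b : ℕ → ℝ}
    (hpre : ∀ k m, q k ≤ m → m < q (k + 1) → ∑ j ∈ Ico (q k) m, a j ≤ ∑ j ∈ Ico (q k) m, b j)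
    (hblock : ∀ k, ∑ j ∈ Ico (q k) (q (k + 1)), a j = ∑ j ∈ Ico (q k) (q (k + 1)), b j) :
    MajB a b := by
  have hrange := sum_range_eq_of_sum_Ico_eq hq.monotone hq0 hblock
  have hq_pos : ∀ k, 1 ≤ q (k + 1) := fun k => (Nat.zero_le _).trans_lt (hq (Nat.lt_add_one k))
  refine ⟨fun n => ?_, fun k => q (k + 1) - 1, fun k l hkl => ?_, fun k => ?_⟩
  · set k := blockIndex q n
    have h₁ : q k ≤ n := apply_blockIndex_le hq0 n
    rw [← sum_range_add_sum_Ico a h₁, ← sum_range_add_sum_Ico b h₁, hrange k]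
    exact add_le_add_right (hpre k n h₁ (lt_apply_blockIndex_succ hq n)) _
  · show q (k + 1) - 1 < q (l + 1) - 1
    have := hq (show k + 1 < l + 1 by omega)
    have := hq_pos k
    omega
  · rw [Nat.sub_add_cancel (hq_pos k)]
    exact hrange (k + 1)

theorem monotone_sum_range_sub {x y : ℕ → ℝ} (hxy : ∀ n, x n ≤ y n) :
    Monotone fun n => ∑ j ∈ range n, (y j - x j) :=
  monotone_nat_of_le_succ fun n => by
    rw [sum_range_succ]
    linarith [hxy n]

theorem MajB.attainsTailMin_add {u v A : ℕ → ℝ} (huv : MajB u v) (hA : Monotone A) :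
    AttainsTailMin fun n => A n + ∑ j ∈ range n, (v j - u j) := by
  obtain ⟨hmaj, φ, hφ_mono, hφ⟩ := huv
  refine attainsTailMin_add_of_monotone hA (fun n => ?_) fun m => ⟨φ m + 1, ?_, ?_⟩
  · simpa [sum_sub_distrib] using hmaj n
  · exact (hφ_mono.id_le m).trans (Nat.le_succ _)
  · simp [sum_sub_distrib, hφ m]

theorem attainsTailMin_of_majB_of_le {ξ η ζ : ℕ → ℝ} (hmb : MajB ξ ζ) (hζη : ∀ n, ζ n ≤ η n) :
    AttainsTailMin fun n => ∑ j ∈ range n, (η j - ξ j) := by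
  convert hmb.attainsTailMin_add (monotone_sum_range_sub hζη) using 2 with n
  rw [← sum_add_distrib]
  exact sum_congr rfl fun j _ => by ring

theorem attainsTailMin_of_le_of_majB {ξ η ρ : ℕ → ℝ} (hξρ : ∀ n, ξ n ≤ ρ n) (hmb : MajB ρ η) :
    AttainsTailMin fun n => ∑ j ∈ range n, (η j - ξ j) := by
  convert hmb.attainsTailMin_add (monotone_sum_range_sub hξρ) using 2 with n
  rw [← sum_add_distrib]
  exact sum_congr rfl fun j _ => by ring

theorem sum_Ico_sub_sum_Ico {ξ η : ℕ → ℝ} {a b : ℕ} (hab : a ≤ b) :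
    ∑ j ∈ Ico a b, η j - ∑ j ∈ Ico a b, ξ j =
      ∑ j ∈ range b, (η j - ξ j) - ∑ j ∈ range a, (η j - ξ j) := by
  rw [← sum_sub_distrib, sum_Ico_eq_sub _ hab]

theorem Maj.exists_blocks {ξ η : ℕ → ℝ} (h : Maj ξ η)
    (hi : AttainsTailMin fun n => ∑ j ∈ range n, (η j - ξ j)) :
    ∃ q : ℕ → ℕ, StrictMono q ∧ q 0 = 0 ∧
      (∀ k m, q k ≤ m → ∑ j ∈ Ico (q k) m, ξ j ≤ ∑ j ∈ Ico (q k) m, η j) ∧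
      ∀ k m, q k < m → m ≤ q (k + 1) →
        ∑ j ∈ Ico m (q (k + 1)), η j ≤ ∑ j ∈ Ico m (q (k + 1)), ξ j := by
  have h0 : ∀ m, ∑ j ∈ range 0, (η j - ξ j) ≤ ∑ j ∈ range m, (η j - ξ j) := fun m => by
    simpa [sum_sub_distrib] using h m
  obtain ⟨q, hq, hq0, hpre, htail⟩ := hi.exists_blocks h0
  refine ⟨q, hq, hq0, fun k m hm => ?_, fun k m hm hm' => ?_⟩
  · linarith [hpre k m hm, sum_Ico_sub_sum_Ico (ξ := ξ) (η := η) hm]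
  · linarith [htail k m hm, sum_Ico_sub_sum_Ico (ξ := ξ) (η := η) hm']

theorem exists_sum_max_eq {ι : Type*} {s : Finset ι} {ξ : ι → ℝ} {T : ℝ} (hs : s.Nonempty)
    (hξ : ∀ j ∈ s, 0 ≤ ξ j) (hT : ∑ j ∈ s, ξ j ≤ T) : ∃ d, ∑ j ∈ s, max (ξ j) d = T := by
  have hT0 : 0 ≤ T := (sum_nonneg hξ).trans hT
  have hcont : ContinuousOn (fun d => ∑ j ∈ s, max (ξ j) d) (Set.Icc 0 T) :=
    (continuous_finsetSum s fun j _ => continuous_const.max continuous_id).continuousOn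
  have hlow : ∑ j ∈ s, max (ξ j) 0 ≤ T := by
    rwa [sum_congr rfl fun j hj => max_eq_left (hξ j hj)]
  have hhigh : T ≤ ∑ j ∈ s, max (ξ j) T := by
    obtain ⟨i, hi⟩ := hs
    exact (le_max_right _ _).trans (single_le_sum (fun j _ => le_max_of_le_right hT0) hi)
  obtain ⟨d, -, hd⟩ := intermediate_value_Icc hT0 hcont ⟨hlow, hhigh⟩
  exact ⟨d, hd⟩

theorem le_of_sum_max_eq {ι : Type*} {s : Finset ι} {ξ η : ι → ℝ} {d a : ℝ} (hs : s.Nonempty)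
    (h : ∑ j ∈ s, max (ξ j) d = ∑ j ∈ s, η j) (hη : ∀ j ∈ s, η j ≤ a) : d ≤ a := by
  have hd : #s • d ≤ #s • a :=
    calc #s • d ≤ ∑ j ∈ s, max (ξ j) d := card_nsmul_le_sum _ _ _ fun _ _ => le_max_right _ _
      _ = ∑ j ∈ s, η j := h
      _ ≤ #s • a := sum_le_card_nsmul _ _ _ hη
  rw [nsmul_eq_mul, nsmul_eq_mul] at hd
  exact le_of_mul_le_mul_left hd (by exact_mod_cast hs.card_pos)

theorem exists_le_majB {ξ η : ℕ → ℝ} (hξ0 : ∀ n, 0 ≤ ξ n) (hξ : Antitone ξ) (hη : IsC0Star η)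
    (h : Maj ξ η) (hi : AttainsTailMin fun n => ∑ j ∈ range n, (η j - ξ j)) :
    ∃ ρ : ℕ → ℝ, IsC0Star ρ ∧ (∀ n, ξ n ≤ ρ n) ∧ MajB ρ η := by
  obtain ⟨-, hη_succ, hη_lim⟩ := hη
  have hη_anti : Antitone η := antitone_nat_of_succ_le hη_succ
  obtain ⟨q, hq, hq0, hpre, htail⟩ := h.exists_blocks hi
  have hne : ∀ k, (Ico (q k) (q (k + 1))).Nonempty := fun k =>
    nonempty_Ico.2 (hq (Nat.lt_add_one k))
  choose d hd using fun k =>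
    exists_sum_max_eq (hne k) (fun j _ => hξ0 j) (hpre k _ (hq (Nat.lt_add_one k)).le)
  set ρ := glueBlocks q fun k j => max (ξ j) (d k)
  have htail_max : ∀ k m, q k ≤ m → m ≤ q (k + 1) →
      ∑ j ∈ Ico m (q (k + 1)), η j ≤ ∑ j ∈ Ico m (q (k + 1)), max (ξ j) (d k) := by
    intro k m hm hm'
    rcases hm.eq_or_lt with rfl | hm
    · exact (hd k).ge
    · exact (htail k m hm hm').trans (sum_le_sum fun j _ => le_max_left _ _)
  have hdη : ∀ k, d k ≤ η (q k) := fun k =>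
    le_of_sum_max_eq (hne k) (hd k) fun j hj => hη_anti (mem_Ico.1 hj).1
  have hρ_anti : Antitone ρ := by
    refine antitone_glueBlocks hq hq0 (fun k i j hij => max_le_max (hξ hij) le_rfl) fun k => ?_
    -- `η ≤ ρ` at the last index of a block, while the next level is at most `η` at its first
    have hlt := hq (Nat.lt_add_one k)
    have hηe : ∀ m, m + 1 = q (k + 1) → η m ≤ max (ξ m) (d k) := fun m hm => by
      have := htail_max k m (by omega) (by omega)
      rwa [← hm, Nat.Ico_succ_singleton, sum_singleton, sum_singleton] at this
    exact max_le (le_max_of_le_left (hξ (Nat.sub_le _ _)))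
      ((hdη (k + 1)).trans ((hη_anti (Nat.sub_le _ _)).trans (hηe _ (by omega))))
  refine ⟨ρ, ⟨fun j => (hξ0 j).trans (le_max_left _ _), fun j => hρ_anti j.le_succ, ?_⟩,
    fun j => le_max_left _ _, majB_of_blocks hq hq0 (fun k m hm hm' => ?_) fun k => ?_⟩
  · rw [tendsto_iff_tendsto_subseq_of_antitone hρ_anti hq.tendsto_atTop]
    refine squeeze_zero (fun k => (hξ0 _).trans (le_max_left _ _)) (fun k => ?_)
      (hη_lim.comp hq.tendsto_atTop)
    have hξη : ξ (q k) ≤ η (q k) := by simpa using hpre k (q k + 1) (Nat.le_succ _)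
    have hρq : ρ (q k) = max (ξ (q k)) (d k) :=
      glueBlocks_apply hq hq0 _ le_rfl (hq (Nat.lt_add_one k))
    rw [Function.comp_apply, Function.comp_apply, hρq]
    exact max_le hξη (hdη k)
  · rw [sum_Ico_glueBlocks hq hq0 _ hm'.le]
    linarith [htail_max k m hm hm'.le, hd k,
      sum_Ico_consecutive (fun j => max (ξ j) (d k)) hm hm'.le, sum_Ico_consecutive η hm hm'.le]
  · rw [sum_Ico_glueBlocks hq hq0 _ le_rfl, hd k]

def IsAdmissibleCap (ξ η : ℕ → ℝ) (p : ℕ) (c : ℝ) : Prop :=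
  ∀ m, ∑ j ∈ Ico p m, ξ j ≤ ∑ j ∈ Ico p m, min (η j) c

namespace IsAdmissibleCap

variable {ξ η : ℕ → ℝ} {p : ℕ} {c : ℝ}

theorem nonneg (h : IsAdmissibleCap ξ η p c) (hξ : 0 ≤ ξ p) : 0 ≤ c := by
  have := h (p + 1)
  rw [Nat.Ico_succ_singleton, sum_singleton, sum_singleton] at this
  exact hξ.trans (this.trans (min_le_right _ _))

theorem restart (h : IsAdmissibleCap ξ η p c) {N : ℕ} (hN : p ≤ N)
    (htight : ∑ j ∈ Ico p N, min (η j) c = ∑ j ∈ Ico p N, ξ j) : IsAdmissibleCap ξ η N c := by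
  intro m
  rcases le_total N m with hm | hm
  · have := h m
    rw [← sum_Ico_consecutive _ hN hm, ← sum_Ico_consecutive _ hN hm] at this
    linarith
  · simp [Ico_eq_empty_of_le hm]

end IsAdmissibleCap

theorem isClosed_setOf_isAdmissibleCap (ξ η : ℕ → ℝ) (p : ℕ) :
    IsClosed {c | IsAdmissibleCap ξ η p c} := by
  simp only [IsAdmissibleCap, Set.ofPred_forall]
  exact isClosed_iInter fun m => isClosed_le continuous_const
    (continuous_finsetSum _ fun j _ => continuous_const.min continuous_id)

theorem sum_Ico_min_sub_sum_Ico_min_le {η : ℕ → ℝ} {c c' : ℝ} (hc : c' ≤ c) {J : ℕ}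
    (hJ : ∀ j, J ≤ j → η j ≤ c') (p m : ℕ) :
    ∑ j ∈ Ico p m, min (η j) c - ∑ j ∈ Ico p m, min (η j) c' ≤ J * (c - c') := by
  rw [← sum_sub_distrib, ← sum_filter_of_ne (p := (· < J)) fun j _ hj => ?_]
  · calc _ ≤ #{j ∈ Ico p m | j < J} • (c - c') := sum_le_card_nsmul _ _ _ fun j _ => by
          simp only [min_def]
          split_ifs <;> linarith
      _ ≤ J * (c - c') := by
          rw [nsmul_eq_mul]
          refine mul_le_mul_of_nonneg_right ?_ (sub_nonneg.2 hc)
          have : {j ∈ Ico p m | j < J} ⊆ range J := fun j hj => mem_range.2 (mem_filter.1 hj).2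
          exact_mod_cast (card_le_card this).trans (card_range J).le
  · by_contra! hJj
    rw [min_eq_left (hJ j hJj), min_eq_left ((hJ j hJj).trans hc), sub_self] at hj
    exact hj rfl

theorem AttainsTailMin.sum_Ico_min_sub_sum_Ico {ξ η : ℕ → ℝ}
    (hi : AttainsTailMin fun n => ∑ j ∈ range n, (η j - ξ j)) {c : ℝ} {J : ℕ}
    (hJ : ∀ j, J ≤ j → η j ≤ c) (p : ℕ) :
    AttainsTailMin fun m => ∑ j ∈ Ico p m, min (η j) c - ∑ j ∈ Ico p m, ξ j := by
  set K := max p J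
  refine hi.of_eq_add_const K ((∑ j ∈ Ico p K, min (η j) c - ∑ j ∈ Ico p K, ξ j) -
    ∑ j ∈ range K, (η j - ξ j)) fun m hm => ?_
  have hmin : ∑ j ∈ Ico K m, min (η j) c = ∑ j ∈ Ico K m, η j :=
    sum_congr rfl fun j hj => min_eq_left (hJ j (le_of_max_le_right (mem_Ico.1 hj).1))
  linarith [sum_Ico_consecutive (fun j => min (η j) c) (le_max_left p J) hm,
    sum_Ico_consecutive ξ (le_max_left p J) hm, sum_Ico_sub_sum_Ico (ξ := ξ) (η := η) hm]

theorem IsAdmissibleCap.exists_tight {ξ η : ℕ → ℝ} {p : ℕ} {v : ℝ}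
    (hv : IsAdmissibleCap ξ η p v) (hξ : ∀ n, 0 ≤ ξ n) (hη : Tendsto η atTop (𝓝 0))
    (hi : AttainsTailMin fun n => ∑ j ∈ range n, (η j - ξ j)) :
    ∃ c ≤ v, IsAdmissibleCap ξ η p c ∧
      ∃ N, p < N ∧ ∑ j ∈ Ico p N, min (η j) c = ∑ j ∈ Ico p N, ξ j := by
  set S := {c | IsAdmissibleCap ξ η p c}
  have hbdd : BddBelow S := ⟨0, fun c hc => hc.nonneg (hξ p)⟩
  have hmem : sInf S ∈ S := (isClosed_setOf_isAdmissibleCap ξ η p).csInf_mem ⟨v, hv⟩ hbdd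
  refine ⟨sInf S, csInf_le hbdd hv, hmem, ?_⟩
  set c := sInf S
  by_contra! hloose
  have hc : 0 < c := by
    refine (hmem.nonneg (hξ p)).lt_of_ne fun hc0 => hloose (p + 1) p.lt_succ_self ?_
    have := hmem (p + 1)
    simp only [Nat.Ico_succ_singleton, sum_singleton, ← hc0] at this ⊢
    linarith [hξ p, min_le_right (η p) 0]
  obtain ⟨J, hJ⟩ : ∃ J, ∀ j, J ≤ j → η j ≤ c / 2 :=
    eventually_atTop.1 (hη.eventually (ge_mem_nhds (half_pos hc)))
  obtain ⟨N, hN, hNmin⟩ :=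
    hi.sum_Ico_min_sub_sum_Ico (fun j hj => (hJ j hj).trans (half_le_self hc.le)) p (p + 1)
  set g := ∑ j ∈ Ico p N, min (η j) c - ∑ j ∈ Ico p N, ξ j
  have hg : 0 < g := (sub_nonneg.2 (hmem N)).lt_of_ne (sub_ne_zero.2 (hloose N hN)).symm
  set ε := min (c / 2) (g / (J + 1))
  have hε : 0 < ε := lt_min (half_pos hc) (by positivity)
  have hJε : J * ε ≤ g := by
    have := (le_div_iff₀ (by positivity : (0 : ℝ) < J + 1)).1 (min_le_right (c / 2) (g / (J + 1)))
    nlinarith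
  have hlower : IsAdmissibleCap ξ η p (c - ε) := by
    intro m
    rcases le_or_gt m p with hm | hm
    · simp [Ico_eq_empty_of_le hm]
    · have hJ' : ∀ j, J ≤ j → η j ≤ c - ε := fun j hj =>
        (hJ j hj).trans (by linarith [min_le_left (c / 2) (g / (J + 1))])
      have hlow := sum_Ico_min_sub_sum_Ico_min_le (sub_le_self c hε.le) hJ' p m
      rw [sub_sub_cancel] at hlow
      have hgm : g ≤ ∑ j ∈ Ico p m, min (η j) c - ∑ j ∈ Ico p m, ξ j := hNmin m hm
      linarith
  linarith [csInf_le hbdd hlower]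

theorem exists_admissibleCaps {ξ η : ℕ → ℝ} (hξ : ∀ n, 0 ≤ ξ n) (hη : IsC0Star η)
    (h : Maj ξ η) (hi : AttainsTailMin fun n => ∑ j ∈ range n, (η j - ξ j)) :
    ∃ (q : ℕ → ℕ) (c : ℕ → ℝ), StrictMono q ∧ q 0 = 0 ∧ Antitone c ∧
      (∀ k, IsAdmissibleCap ξ η (q k) (c k)) ∧
      ∀ k, ∑ j ∈ Ico (q k) (q (k + 1)), min (η j) (c k) = ∑ j ∈ Ico (q k) (q (k + 1)), ξ j := by
  have hstart : IsAdmissibleCap ξ η 0 (η 0) := fun m => by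
    have hη_anti : Antitone η := antitone_nat_of_succ_le hη.2.1
    simpa [min_eq_left (hη_anti (Nat.zero_le _))] using h m
  choose! C hCv hC N hN htight using fun (s : ℕ × ℝ) (hs : IsAdmissibleCap ξ η s.1 s.2) =>
    hs.exists_tight hξ hη.2.2 hi
  set s : ℕ → ℕ × ℝ := fun k => (fun x => (N x, C x))^[k] (0, η 0)
  have hs_succ : ∀ k, s (k + 1) = (N (s k), C (s k)) := fun k =>
    Function.iterate_succ_apply' _ _ _
  have hadm : ∀ k, IsAdmissibleCap ξ η (s k).1 (s k).2 := by
    intro k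
    induction k with
    | zero => exact hstart
    | succ k ih => rw [hs_succ]; exact (hC _ ih).restart (hN _ ih).le (htight _ ih)
  refine ⟨fun k => (s k).1, fun k => C (s k), strictMono_nat_of_lt_succ fun k => ?_, rfl,
    antitone_nat_of_succ_le fun k => ?_, fun k => hC _ (hadm k), fun k => ?_⟩
  · rw [hs_succ]
    exact hN _ (hadm k)
  · have := hCv _ (hadm (k + 1))
    rw [hs_succ k] at this ⊢
    exact this
  · simp only [hs_succ k]
    exact htight _ (hadm k)

theorem exists_majB_le {ξ η : ℕ → ℝ} (hξ : ∀ n, 0 ≤ ξ n) (hη : IsC0Star η) (h : Maj ξ η)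
    (hi : AttainsTailMin fun n => ∑ j ∈ range n, (η j - ξ j)) :
    ∃ ζ : ℕ → ℝ, IsC0Star ζ ∧ MajB ξ ζ ∧ ∀ n, ζ n ≤ η n := by
  obtain ⟨q, c, hq, hq0, hc, hadm, htight⟩ := exists_admissibleCaps hξ hη h hi
  obtain ⟨hη0, hη_succ, hη_lim⟩ := hη
  have hη_anti : Antitone η := antitone_nat_of_succ_le hη_succ
  set ζ := glueBlocks q fun k j => min (η j) (c k)
  have hζ0 : ∀ n, 0 ≤ ζ n := fun n => le_min (hη0 n) ((hadm _).nonneg (hξ _))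
  have hζη : ∀ n, ζ n ≤ η n := fun n => min_le_left _ _
  have hζ_anti : Antitone ζ :=
    antitone_glueBlocks hq hq0 (fun k i j hij => min_le_min (hη_anti hij) le_rfl) fun k =>
      min_le_min (hη_anti (Nat.sub_le _ _)) (hc k.le_succ)
  refine ⟨ζ, ⟨hζ0, fun n => hζ_anti n.le_succ, squeeze_zero hζ0 hζη hη_lim⟩,
    majB_of_blocks hq hq0 (fun k m _ hm => ?_) fun k => ?_, hζη⟩
  · rw [sum_Ico_glueBlocks hq hq0 _ hm.le]
    exact hadm k m
  · rw [sum_Ico_glueBlocks hq hq0 _ le_rfl]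
    exact (htight k).symm

theorem stmt_13 (ξ η : ℕ → ℝ) (hξ : IsC0Star ξ) (hη : IsC0Star η) (h : Maj ξ η) :
    ((∀ m : ℕ, ∃ n : ℕ, m ≤ n ∧ ∀ n' : ℕ, m ≤ n' →
        (∑ j ∈ Finset.range n, (η j - ξ j)) ≤ ∑ j ∈ Finset.range n', (η j - ξ j)) ↔
      (∃ ζ : ℕ → ℝ, IsC0Star ζ ∧ MajB ξ ζ ∧ ∀ n, ζ n ≤ η n)) ∧
    ((∃ ζ : ℕ → ℝ, IsC0Star ζ ∧ MajB ξ ζ ∧ ∀ n, ζ n ≤ η n) ↔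
      (∃ ρ : ℕ → ℝ, IsC0Star ρ ∧ (∀ n, ξ n ≤ ρ n) ∧ MajB ρ η)) := by
  obtain ⟨hξ0, hξ_succ, -⟩ := hξ
  have hii_i : (∃ ζ : ℕ → ℝ, IsC0Star ζ ∧ MajB ξ ζ ∧ ∀ n, ζ n ≤ η n) →
      AttainsTailMin fun n => ∑ j ∈ range n, (η j - ξ j) := fun ⟨_, _, hmb, hle⟩ =>
    attainsTailMin_of_majB_of_le hmb hle
  refine ⟨⟨exists_majB_le hξ0 hη h, hii_i⟩, ⟨fun hii => ?_, fun ⟨_, _, hle, hmb⟩ => ?_⟩⟩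
  · exact exists_le_majB hξ0 (antitone_nat_of_succ_le hξ_succ) hη h (hii_i hii)
  · exact exists_majB_le hξ0 hη h (attainsTailMin_of_le_of_majB hle hmb)
end

section
/- Let ξ, η ∈ c₀* with ξ ≺ η. Then: (i) there exists ζ ∈ c₀* with ξ ≼ ζ and ζ_n ≤ η_n for all n; (ii) there exists ρ ∈ c₀* with ξ_n ≤ ρ_n for all n and ρ ≼ η. -/
/-- `ξ ≼ η`: strong majorization (`ξ ≺ η` and `liminf ∑_{j≤n}(η_j − ξ_j) = 0`). -/
def MajS (ξ η : ℕ → ℝ) : Prop :=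
  Maj ξ η ∧ ∀ ε : ℝ, 0 < ε → ∀ N : ℕ, ∃ n : ℕ, N ≤ n ∧
    (∑ j ∈ Finset.range n, η j) - (∑ j ∈ Finset.range n, ξ j) < ε

/-!
For (i), cut `η` down to decreasing water levels: `ζ n = min (η n) (v n)`, where `v n`
(`minLevel`) is the least level `v` such that truncating the rest of `η` at `v` keeps the partial
sums above those of `ξ`, given the partial sums of `ζ` so far. The previous cut is itself an
admissible level, so the levels decrease. If the gap `∑ (ζ - ξ)` stayed above `ε` from `N` on,
lowering `v N` by a small `δ` would cost at most `K * δ < ε` (`η` lies below `v N / 2` after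
`K`), contradicting minimality; when `v N = 0` the partial sums of `ζ` are eventually constant
and no larger than the supremum of those of `ξ`.

For (ii), let `U n = ∑_{j<n} ξ j + inf_{m ≥ n} ∑_{j<m} (η j - ξ j)` (`envelope`). It lies
below the partial sums of `η` and grows by at least `ξ n` at step `n`. Choose `ρ` greedily, as
large as allowed by monotonicity and by staying below `U`. Whenever the partial sums of `ρ` meet
`U`, the infimum defining `U` makes `∑ (η - ρ)` smaller than any `ε` further on. If they stop
meeting `U`, `ρ` is eventually constant, hence eventually `0`, and from the first zero of `ρ` on
`η` vanishes too.
-/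

open Finset Filter
open scoped Topology

namespace Majorization

lemma tendsto_zero_of_antitone_of_maj {ρ η : ℕ → ℝ} (hρ0 : ∀ n, 0 ≤ ρ n) (hρ : Antitone ρ)
    (hη : Tendsto η atTop (𝓝 0)) (h : Maj ρ η) : Tendsto ρ atTop (𝓝 0) := by
  refine squeeze_zero hρ0 (fun n => ?_) (hη.cesaro.comp (tendsto_add_atTop_nat 1))
  rw [Function.comp_apply, le_inv_mul_iff₀ (by positivity)]
  calc ((n + 1 : ℕ) : ℝ) * ρ n = ∑ _i ∈ range (n + 1), ρ n := by simp
    _ ≤ ∑ i ∈ range (n + 1), ρ i :=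
      sum_le_sum fun i hi => hρ (Nat.lt_succ_iff.1 (mem_range.1 hi))
    _ ≤ ∑ i ∈ range (n + 1), η i := h (n + 1)

lemma sum_range_eq_of_forall_ge_eq_zero {M : Type*} [AddCommMonoid M] {f : ℕ → M} {p m : ℕ}
    (hf : ∀ k, p ≤ k → f k = 0) (hpm : p ≤ m) : ∑ k ∈ range m, f k = ∑ k ∈ range p, f k := by
  rw [← sum_range_add_sum_Ico _ hpm, sum_eq_zero fun k hk => hf k (mem_Ico.1 hk).1, add_zero]

lemma sum_min_add_le {f : ℕ → ℝ} {v δ : ℝ} {K : ℕ} (hδ : 0 ≤ δ) (hK : ∀ k, K ≤ k → f k ≤ v)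
    (s : Finset ℕ) : ∑ k ∈ s, min (v + δ) (f k) ≤ ∑ k ∈ s, min v (f k) + K * δ := by
  have hterm : ∀ k ∈ s, min (v + δ) (f k) ≤ min v (f k) + if k < K then δ else 0 := by
    intro k _
    split_ifs with hk
    · rw [← min_add_add_right]
      exact min_le_min le_rfl (le_add_of_nonneg_right hδ)
    · have hfk := hK k (not_lt.1 hk)
      rw [min_eq_right (hfk.trans (le_add_of_nonneg_right hδ)), min_eq_right hfk, add_zero]
  have hcard : ((s.filter (· < K)).card : ℝ) ≤ K := by
    exact_mod_cast (card_le_card fun k hk => mem_range.2 (mem_filter.1 hk).2).trans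
      (card_range K).le
  calc ∑ k ∈ s, min (v + δ) (f k) ≤ ∑ k ∈ s, (min v (f k) + if k < K then δ else 0) :=
        sum_le_sum hterm
    _ = ∑ k ∈ s, min v (f k) + (s.filter (· < K)).card * δ := by
        rw [sum_add_distrib, ← sum_filter, sum_const, nsmul_eq_mul]
    _ ≤ ∑ k ∈ s, min v (f k) + K * δ := by gcongr

noncomputable section Truncation

variable (ξ η : ℕ → ℝ)

def IsAdmissibleLevel (n : ℕ) (z v : ℝ) : Prop :=
  ∀ m, n ≤ m → ∑ j ∈ range m, ξ j ≤ z + ∑ k ∈ Ico n m, min v (η k)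

def minLevel (n : ℕ) (z : ℝ) : ℝ :=
  sInf {v | 0 ≤ v ∧ IsAdmissibleLevel ξ η n z v}

def cutSum : ℕ → ℝ
  | 0 => 0
  | n + 1 => cutSum n + min (η n) (minLevel ξ η n (cutSum n))

def cut (n : ℕ) : ℝ :=
  min (η n) (minLevel ξ η n (cutSum ξ η n))

lemma cutSum_succ (n : ℕ) : cutSum ξ η (n + 1) = cutSum ξ η n + cut ξ η n := rfl

lemma cutSum_eq_sum (n : ℕ) : cutSum ξ η n = ∑ k ∈ range n, cut ξ η k := by
  induction n with
  | zero => rfl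
  | succ n ih => rw [cutSum_succ, ih, sum_range_succ]

lemma cut_le (n : ℕ) : cut ξ η n ≤ η n := min_le_left _ _

lemma isClosed_setOf_isAdmissibleLevel (n : ℕ) (z : ℝ) :
    IsClosed {v | IsAdmissibleLevel ξ η n z v} := by
  simp only [IsAdmissibleLevel, Set.ofPred_forall]
  exact isClosed_iInter fun m => isClosed_iInter fun _ =>
    isClosed_le continuous_const (by fun_prop)

variable {ξ η}

lemma minLevel_le {n : ℕ} {z v : ℝ} (hv : 0 ≤ v) (h : IsAdmissibleLevel ξ η n z v) :
    minLevel ξ η n z ≤ v :=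
  csInf_le ⟨0, fun _ hw => hw.1⟩ ⟨hv, h⟩

lemma minLevel_mem {n : ℕ} {z v : ℝ} (hv : 0 ≤ v) (h : IsAdmissibleLevel ξ η n z v) :
    0 ≤ minLevel ξ η n z ∧ IsAdmissibleLevel ξ η n z (minLevel ξ η n z) :=
  (isClosed_Ici.inter (isClosed_setOf_isAdmissibleLevel ξ η n z)).csInf_mem ⟨v, hv, h⟩
    ⟨0, fun _ hw => hw.1⟩

lemma isAdmissibleLevel_zero (hη : Antitone η) (h : Maj ξ η) :
    IsAdmissibleLevel ξ η 0 0 (η 0) := by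
  intro m _
  rw [zero_add, ← range_eq_Ico, sum_congr rfl fun k _ => min_eq_right (hη k.zero_le)]
  exact h m

lemma IsAdmissibleLevel.succ (hη : Antitone η) {n : ℕ} {z v : ℝ}
    (h : IsAdmissibleLevel ξ η n z v) :
    IsAdmissibleLevel ξ η (n + 1) (z + min (η n) v) (min (η n) v) := by
  intro m hm
  have hle := h m (by omega)
  rw [sum_eq_sum_Ico_succ_bot (by omega : n < m), min_comm, ← add_assoc] at hle
  convert hle using 3 with k hk
  rw [min_comm (η n), min_assoc, min_eq_right (hη (by simp at hk; omega) : η k ≤ η n)]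

variable (hη0 : ∀ n, 0 ≤ η n) (hη : Antitone η) (h : Maj ξ η)
include hη0 hη h

lemma minLevel_cutSum_mem (n : ℕ) :
    0 ≤ minLevel ξ η n (cutSum ξ η n) ∧
      IsAdmissibleLevel ξ η n (cutSum ξ η n) (minLevel ξ η n (cutSum ξ η n)) := by
  induction n with
  | zero => exact minLevel_mem (hη0 0) (isAdmissibleLevel_zero hη h)
  | succ n ih => exact minLevel_mem (le_min (hη0 n) ih.1) (ih.2.succ hη)

lemma cut_nonneg (n : ℕ) : 0 ≤ cut ξ η n :=
  le_min (hη0 n) (minLevel_cutSum_mem hη0 hη h n).1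

lemma cut_antitone : Antitone (cut ξ η) :=
  antitone_nat_of_succ_le fun n => (min_le_right _ _).trans <|
    minLevel_le (cut_nonneg hη0 hη h n) ((minLevel_cutSum_mem hη0 hη h n).2.succ hη)

lemma sum_le_cutSum (n : ℕ) : ∑ j ∈ range n, ξ j ≤ cutSum ξ η n := by
  simpa using (minLevel_cutSum_mem hη0 hη h n).2 n le_rfl

lemma cutSum_le_of_forall_sum_le {B : ℝ} (hB : ∀ m, ∑ j ∈ range m, ξ j ≤ B) (n : ℕ) :
    cutSum ξ η n ≤ B := by
  induction n with
  | zero => simpa [cutSum] using hB 0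
  | succ n ih =>
    rw [cutSum_succ]
    by_contra! hlt
    have hw : B - cutSum ξ η n < η n := by linarith [cut_le ξ η n]
    -- below the current cut, the level `B - cutSum n` already reaches `B` in one step
    have hadm : IsAdmissibleLevel ξ η n (cutSum ξ η n) (B - cutSum ξ η n) := by
      intro m hm
      rcases hm.eq_or_lt with rfl | hnm
      · simpa using sum_le_cutSum hη0 hη h n
      · rw [sum_eq_sum_Ico_succ_bot hnm, min_eq_left hw.le]
        have : 0 ≤ ∑ k ∈ Ico (n + 1) m, min (B - cutSum ξ η n) (η k) :=
          sum_nonneg fun k _ => le_min (sub_nonneg.2 ih) (hη0 k)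
        linarith [hB m]
    have hcut : cut ξ η n ≤ minLevel ξ η n (cutSum ξ η n) := min_le_right _ _
    linarith [minLevel_le (sub_nonneg.2 ih) hadm]

lemma cutSum_le_add_sum_min {N m : ℕ} (hNm : N ≤ m) :
    cutSum ξ η m ≤
      cutSum ξ η N + ∑ k ∈ Ico N m, min (minLevel ξ η N (cutSum ξ η N)) (η k) := by
  have hsplit : cutSum ξ η m = cutSum ξ η N + ∑ k ∈ Ico N m, cut ξ η k := by
    rw [cutSum_eq_sum, cutSum_eq_sum, sum_range_add_sum_Ico _ hNm]
  rw [hsplit]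
  gcongr with k hk
  exact le_min ((cut_antitone hη0 hη h (mem_Ico.1 hk).1).trans (min_le_right _ _))
    (cut_le ξ η k)

lemma exists_cutSum_sub_sum_lt (hξ0 : ∀ n, 0 ≤ ξ n) (hηt : Tendsto η atTop (𝓝 0)) {ε : ℝ}
    (hε : 0 < ε) (N : ℕ) : ∃ m, N ≤ m ∧ cutSum ξ η m - ∑ j ∈ range m, ξ j < ε := by
  by_contra! hgap
  set V := minLevel ξ η N (cutSum ξ η N)
  rcases (minLevel_cutSum_mem hη0 hη h N).1.eq_or_lt with hV | hV
  · have hX : ∀ m, ∑ j ∈ range m, ξ j ≤ cutSum ξ η N - ε := fun m => by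
      have hcut := cutSum_le_add_sum_min hη0 hη h (le_max_right m N)
      simp only [← hV, sum_congr rfl fun k _ => min_eq_left (hη0 k), sum_const_zero,
        add_zero] at hcut
      have hmono := sum_le_sum_of_subset_of_nonneg (range_mono (le_max_left m N))
        fun k _ _ => hξ0 k
      linarith [hgap _ (le_max_right m N)]
    linarith [cutSum_le_of_forall_sum_le hη0 hη h hX N]
  · obtain ⟨K, hK⟩ := eventually_atTop.1 (hηt.eventually (ge_mem_nhds (half_pos hV)))
    set δ := min (V / 2) (ε / (K + 1))
    have hδ : 0 < δ := lt_min (half_pos hV) (by positivity)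
    have hδV : δ ≤ V / 2 := min_le_left _ _
    have hKδ : K * δ ≤ ε :=
      calc K * δ ≤ (K + 1) * (ε / (K + 1)) := by gcongr; linarith; exact min_le_right _ _
        _ = ε := mul_div_cancel₀ _ (by positivity)
    have hadm : IsAdmissibleLevel ξ η N (cutSum ξ η N) (V - δ) := by
      intro m hm
      have hmin := sum_min_add_le hδ.le
        (fun k hk => (hK k hk).trans (show V / 2 ≤ V - δ by linarith)) (Ico N m)
      rw [sub_add_cancel] at hmin
      linarith [hgap m hm, cutSum_le_add_sum_min hη0 hη h hm]
    linarith [minLevel_le (by linarith) hadm]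

end Truncation

noncomputable section Filling

variable (ξ η : ℕ → ℝ)

def tailGap (n : ℕ) : ℝ :=
  ⨅ m : Set.Ici n, (∑ j ∈ range m, η j - ∑ j ∈ range m, ξ j)

def envelope (n : ℕ) : ℝ := ∑ j ∈ range n, ξ j + tailGap ξ η n

-- partial sums of `ρ`: each increment is the previous one, capped by the room left below `U`
def fillSum : ℕ → ℝ
  | 0 => 0
  | 1 => envelope ξ η 1
  | n + 2 => min (2 * fillSum (n + 1) - fillSum n) (envelope ξ η (n + 2))

def fill (n : ℕ) : ℝ := fillSum ξ η (n + 1) - fillSum ξ η n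

lemma fill_zero : fill ξ η 0 = envelope ξ η 1 := by simp [fill, fillSum]

lemma fill_succ (n : ℕ) :
    fill ξ η (n + 1) = min (fill ξ η n) (envelope ξ η (n + 2) - fillSum ξ η (n + 1)) := by
  rw [fill, fill, fillSum, ← min_sub_sub_right]
  ring_nf

lemma fillSum_succ (n : ℕ) : fillSum ξ η (n + 1) = fillSum ξ η n + fill ξ η n := by
  rw [fill]; ring

lemma sum_fill (n : ℕ) : ∑ k ∈ range n, fill ξ η k = fillSum ξ η n :=
  (sum_range_sub (fillSum ξ η) n).trans (sub_zero _)

lemma fill_antitone : Antitone (fill ξ η) :=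
  antitone_nat_of_succ_le fun n => (fill_succ ξ η n).trans_le (min_le_left _ _)

lemma exists_lt_tailGap_add (n : ℕ) {ε : ℝ} (hε : 0 < ε) :
    ∃ m, n ≤ m ∧ ∑ j ∈ range m, η j - ∑ j ∈ range m, ξ j < tailGap ξ η n + ε :=
  have : Nonempty (Set.Ici n) := ⟨⟨n, Set.mem_Ici.2 le_rfl⟩⟩
  let ⟨⟨m, hm⟩, hlt⟩ := exists_lt_of_ciInf_lt (lt_add_of_pos_right (tailGap ξ η n) hε)
  ⟨m, hm, hlt⟩

variable {ξ η}

lemma fill_eq_of_forall_lt_envelope {N : ℕ}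
    (hlt : ∀ n, N ≤ n → fillSum ξ η n < envelope ξ η n) (k : ℕ) (hk : N ≤ k) :
    fill ξ η k = fill ξ η N := by
  induction k, hk using Nat.le_induction with
  | base => rfl
  | succ k hk ih =>
    rw [fill_succ, min_eq_left, ih]
    by_contra! hgt
    have := hlt (k + 2) (by omega)
    rw [fillSum_succ, fill_succ, min_eq_right hgt.le] at this
    linarith

lemma exists_eq_envelope_of_fill_eq_zero {n : ℕ} (hn : fill ξ η n = 0) :
    ∃ p ≤ n, fill ξ η p = 0 ∧ fillSum ξ η (p + 1) = envelope ξ η (p + 1) := by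
  induction n with
  | zero => exact ⟨0, le_rfl, hn, rfl⟩
  | succ n ih =>
    by_cases hn' : fill ξ η n = 0
    · obtain ⟨p, hp, hfill, htouch⟩ := ih hn'
      exact ⟨p, hp.trans n.le_succ, hfill, htouch⟩
    · refine ⟨n + 1, le_rfl, hn, ?_⟩
      have hmin := hn
      rw [fill_succ] at hmin
      rcases min_eq_iff.1 hmin with ⟨hfill, -⟩ | ⟨hgap, -⟩
      · exact absurd hfill hn'
      · rw [fillSum_succ, hn]
        linarith

variable (h : Maj ξ η)
include h

lemma tailGap_le {n m : ℕ} (hnm : n ≤ m) :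
    tailGap ξ η n ≤ ∑ j ∈ range m, η j - ∑ j ∈ range m, ξ j :=
  ciInf_le ⟨0, by rintro _ ⟨k, rfl⟩; exact sub_nonneg.2 (h k)⟩ (⟨m, hnm⟩ : Set.Ici n)

lemma tailGap_nonneg (n : ℕ) : 0 ≤ tailGap ξ η n :=
  have : Nonempty (Set.Ici n) := ⟨⟨n, Set.mem_Ici.2 le_rfl⟩⟩
  le_ciInf fun m => sub_nonneg.2 (h m)

lemma tailGap_le_succ (n : ℕ) : tailGap ξ η n ≤ tailGap ξ η (n + 1) :=
  le_ciInf fun m => tailGap_le h (Nat.le_of_succ_le m.2)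

lemma envelope_le (n : ℕ) : envelope ξ η n ≤ ∑ j ∈ range n, η j := by
  unfold envelope
  linarith [tailGap_le h (le_refl n)]

lemma envelope_add_le_envelope_succ (n : ℕ) :
    envelope ξ η n + ξ n ≤ envelope ξ η (n + 1) := by
  unfold envelope
  rw [sum_range_succ]
  linarith [tailGap_le_succ h n]

lemma fillSum_le_envelope : ∀ n, fillSum ξ η n ≤ envelope ξ η n
  | 0 => by simpa [fillSum, envelope] using tailGap_nonneg h 0
  | 1 => le_rfl
  | _ + 2 => min_le_right _ _

lemma maj_fill : Maj (fill ξ η) η := fun n => by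
  rw [sum_fill]
  exact (fillSum_le_envelope h n).trans (envelope_le h n)

variable (hξ : Antitone ξ)
include hξ

lemma le_fill (n : ℕ) : ξ n ≤ fill ξ η n := by
  induction n with
  | zero =>
    have : 0 ≤ envelope ξ η 0 := by simpa [envelope] using tailGap_nonneg h 0
    linarith [fill_zero ξ η, envelope_add_le_envelope_succ h 0]
  | succ n ih =>
    rw [fill_succ]
    exact le_min ((hξ n.le_succ).trans ih)
      (by linarith [envelope_add_le_envelope_succ h (n + 1), fillSum_le_envelope h (n + 1)])

lemma sum_Ico_le_fillSum_sub {n m : ℕ} (hnm : n ≤ m) :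
    ∑ k ∈ Ico n m, ξ k ≤ fillSum ξ η m - fillSum ξ η n := by
  rw [← sum_fill, ← sum_fill, ← sum_Ico_eq_sub _ hnm]
  exact sum_le_sum fun k _ => le_fill h hξ k

lemma exists_sum_sub_fillSum_lt_of_eq_envelope {n : ℕ}
    (htouch : fillSum ξ η n = envelope ξ η n) {ε : ℝ} (hε : 0 < ε) :
    ∃ m, n ≤ m ∧ ∑ j ∈ range m, η j - fillSum ξ η m < ε := by
  obtain ⟨m, hnm, hlt⟩ := exists_lt_tailGap_add ξ η n hε
  refine ⟨m, hnm, ?_⟩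
  have hfill := sum_Ico_le_fillSum_sub h hξ hnm
  rw [sum_Ico_eq_sub _ hnm] at hfill
  unfold envelope at htouch
  linarith

lemma sum_le_fillSum_of_fill_eq_zero (hξ0 : ∀ n, 0 ≤ ξ n) (hη0 : ∀ n, 0 ≤ η n)
    (hη : Antitone η) {p : ℕ} (hp : fill ξ η p = 0)
    (htouch : fillSum ξ η (p + 1) = envelope ξ η (p + 1)) {m : ℕ} (hm : p + 1 ≤ m) :
    ∑ j ∈ range m, η j ≤ fillSum ξ η m := by
  have hfill : ∀ k, p ≤ k → fill ξ η k = 0 := fun k hk =>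
    le_antisymm (hp ▸ fill_antitone ξ η hk) ((hξ0 k).trans (le_fill h hξ k))
  have hξp : ∀ k, p ≤ k → ξ k = 0 := fun k hk =>
    le_antisymm (hfill k hk ▸ le_fill h hξ k) (hξ0 k)
  have hX : ∀ k, p ≤ k → ∑ j ∈ range k, ξ j = ∑ j ∈ range p, ξ j := fun k =>
    sum_range_eq_of_forall_ge_eq_zero hξp
  have hR : ∀ k, p ≤ k → fillSum ξ η k = fillSum ξ η p := fun k hk => by
    rw [← sum_fill, ← sum_fill, sum_range_eq_of_forall_ge_eq_zero hfill hk]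
  -- once `ξ` vanishes the gap can only grow, so `U` meets the partial sums of `η`
  have hYR : ∑ j ∈ range (p + 1), η j ≤ fillSum ξ η (p + 1) := by
    have hgap : ∑ j ∈ range (p + 1), η j - ∑ j ∈ range (p + 1), ξ j ≤ tailGap ξ η (p + 1) :=
      have : Nonempty (Set.Ici (p + 1)) := ⟨⟨p + 1, Set.mem_Ici.2 le_rfl⟩⟩
      le_ciInf fun ⟨k, hk⟩ => by
        rw [hX k (by simp at hk; omega), hX (p + 1) p.le_succ]
        gcongr
        exacts [fun j _ _ => hη0 j, hk]
    rw [htouch, envelope]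
    linarith
  have hηp : ∀ k, p ≤ k → η k = 0 := by
    have : η p ≤ 0 := by
      linarith [sum_range_succ η p, hR (p + 1) p.le_succ, maj_fill h p, sum_fill ξ η p]
    exact fun k hk => le_antisymm ((hη hk).trans this) (hη0 k)
  rw [sum_range_eq_of_forall_ge_eq_zero hηp (by omega), hR m (by omega)]
  linarith [sum_range_succ η p, hηp p le_rfl, hR (p + 1) p.le_succ]

lemma tendsto_fill (hξ0 : ∀ n, 0 ≤ ξ n) (hηt : Tendsto η atTop (𝓝 0)) :
    Tendsto (fill ξ η) atTop (𝓝 0) :=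
  tendsto_zero_of_antitone_of_maj (fun n => (hξ0 n).trans (le_fill h hξ n))
    (fill_antitone ξ η) hηt (maj_fill h)

lemma exists_sum_sub_fillSum_lt (hξ0 : ∀ n, 0 ≤ ξ n) (hη0 : ∀ n, 0 ≤ η n) (hη : Antitone η)
    (hηt : Tendsto η atTop (𝓝 0)) {ε : ℝ} (hε : 0 < ε) (N : ℕ) :
    ∃ m, N ≤ m ∧ ∑ j ∈ range m, η j - fillSum ξ η m < ε := by
  by_cases htouch : ∃ n, N ≤ n ∧ fillSum ξ η n = envelope ξ η n
  · obtain ⟨n, hNn, htouch⟩ := htouch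
    obtain ⟨m, hnm, hlt⟩ := exists_sum_sub_fillSum_lt_of_eq_envelope h hξ htouch hε
    exact ⟨m, hNn.trans hnm, hlt⟩
  · push Not at htouch
    have hconst := fill_eq_of_forall_lt_envelope
      fun n hn => (fillSum_le_envelope h n).lt_of_ne (htouch n hn)
    have hN : fill ξ η N = 0 := tendsto_nhds_unique
      (tendsto_const_nhds.congr' (eventually_atTop.2 ⟨N, fun k hk => (hconst k hk).symm⟩))
      (tendsto_fill h hξ hξ0 hηt)
    obtain ⟨p, hpN, hp, hpt⟩ := exists_eq_envelope_of_fill_eq_zero hN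
    refine ⟨N + 1, N.le_succ, ?_⟩
    linarith [sum_le_fillSum_of_fill_eq_zero h hξ hξ0 hη0 hη hp hpt (Nat.succ_le_succ hpN)]

end Filling

variable {ξ η : ℕ → ℝ}

theorem exists_majS_le (hξ0 : ∀ n, 0 ≤ ξ n) (hη : IsC0Star η) (h : Maj ξ η) :
    ∃ ζ : ℕ → ℝ, IsC0Star ζ ∧ MajS ξ ζ ∧ ∀ n, ζ n ≤ η n := by
  obtain ⟨hη0, hηa, hηt⟩ := hη
  have hη := antitone_nat_of_succ_le hηa
  refine ⟨cut ξ η, ⟨cut_nonneg hη0 hη h, fun n => cut_antitone hη0 hη h n.le_succ,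
    squeeze_zero (cut_nonneg hη0 hη h) (cut_le ξ η) hηt⟩, ⟨fun n => ?_, fun ε hε N => ?_⟩,
    cut_le ξ η⟩
  · rw [← cutSum_eq_sum]
    exact sum_le_cutSum hη0 hη h n
  · simpa only [cutSum_eq_sum] using exists_cutSum_sub_sum_lt hη0 hη h hξ0 hηt hε N

theorem exists_le_majS (hξ0 : ∀ n, 0 ≤ ξ n) (hξ : Antitone ξ) (hη : IsC0Star η)
    (h : Maj ξ η) : ∃ ρ : ℕ → ℝ, IsC0Star ρ ∧ (∀ n, ξ n ≤ ρ n) ∧ MajS ρ η := by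
  obtain ⟨hη0, hηa, hηt⟩ := hη
  refine ⟨fill ξ η, ⟨fun n => (hξ0 n).trans (le_fill h hξ n),
    fun n => fill_antitone ξ η n.le_succ, tendsto_fill h hξ hξ0 hηt⟩, le_fill h hξ, maj_fill h,
    fun ε hε N => ?_⟩
  simpa only [sum_fill] using
    exists_sum_sub_fillSum_lt h hξ hξ0 hη0 (antitone_nat_of_succ_le hηa) hηt hε N

end Majorization

theorem stmt_14 (ξ η : ℕ → ℝ) (hξ : IsC0Star ξ) (hη : IsC0Star η) (h : Maj ξ η) :
    (∃ ζ : ℕ → ℝ, IsC0Star ζ ∧ MajS ξ ζ ∧ ∀ n, ζ n ≤ η n) ∧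
    (∃ ρ : ℕ → ℝ, IsC0Star ρ ∧ (∀ n, ξ n ≤ ρ n) ∧ MajS ρ η) := by
  obtain ⟨hξ0, hξa, -⟩ := hξ
  exact ⟨Majorization.exists_majS_le hξ0 hη h,
    Majorization.exists_le_majS hξ0 (antitone_nat_of_succ_le hξa) hη h⟩
end

section
/- Let ξ, η ∈ (ℓ¹)* with ξ ≺_∞ η. Then: (i) there exists ζ ∈ (ℓ¹)* with ξ ≼_∞ ζ and ζ_n ≤ η_n for all n; (ii) there exists ρ ∈ (ℓ¹)* with ξ_n ≤ ρ_n for all n and ρ ≼_∞ η. -/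
/-- `ξ ≺_∞ η`: majorization at infinity, `∑_{j=n}^∞ ξ_j ≤ ∑_{j=n}^∞ η_j` for every `n`. -/
def MajInf (ξ η : ℕ → ℝ) : Prop :=
  ∀ n : ℕ, (∑' k : ℕ, ξ (n + k)) ≤ ∑' k : ℕ, η (n + k)

/-- `ξ ≼_∞ η`: strong majorization at infinity (`ξ ≺_∞ η` and equal total sums). -/
def MajSInf (ξ η : ℕ → ℝ) : Prop :=
  MajInf ξ η ∧ (∑' j : ℕ, ξ j) = ∑' j : ℕ, η j

/-!
Replace each `ξ ∈ (ℓ¹)*` by its tail-sum function `X n = ∑_{k ≥ n} ξ k`: these are exactly the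
nonincreasing convex null sequences, and `ξ n = X n - X (n + 1)`. With `H` the tail-sum function
of `η`, `ξ ≺_∞ η` says `X ≤ H`; (i) asks for such a `Z ≥ X` with `Z 0 = X 0` whose drops are at
most those of `H`, and (ii) for such an `R ≤ H` with `R 0 = H 0` whose drops are at least those
of `X`. For (i) the greedy choice works: go down from `X 0` by `η n` at step `n`, but never below
`X`. For (ii) take `max (X n) (H 0 - n c)`, where the slope `c` dominates every drop of `X` and
of `H`.
-/

open Filter Topology

noncomputable def tailSum (f : ℕ → ℝ) (n : ℕ) : ℝ := ∑' k, f (n + k)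

theorem tailSum_zero (f : ℕ → ℝ) : tailSum f 0 = ∑' j, f j := by
  simp [tailSum]

theorem tailSum_sub_tailSum_succ {f : ℕ → ℝ} (hf : Summable f) (n : ℕ) :
    tailSum f n - tailSum f (n + 1) = f n := by
  have hshift : Summable fun k => f (n + k) := by
    simpa [add_comm] using (summable_nat_add_iff n).2 hf
  rw [tailSum, tailSum, hshift.tsum_eq_zero_add, add_zero, add_sub_assoc, add_eq_left, sub_eq_zero]
  exact tsum_congr fun k => congr_arg f (by omega)

theorem tendsto_tailSum (f : ℕ → ℝ) : Tendsto (tailSum f) atTop (𝓝 0) := by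
  show Tendsto (fun n => ∑' k, f (n + k)) atTop (𝓝 0)
  simpa [add_comm] using tendsto_sum_nat_add f

structure IsConvexTail (R : ℕ → ℝ) : Prop where
  antitone : Antitone R
  antitone_sub_succ : Antitone fun n => R n - R (n + 1)
  tendsto : Tendsto R atTop (𝓝 0)

theorem isConvexTail_tailSum {ξ : ℕ → ℝ} (hξ : IsC0Star ξ) (hs : Summable ξ) :
    IsConvexTail (tailSum ξ) where
  antitone := antitone_nat_of_succ_le fun n => by
    linarith [tailSum_sub_tailSum_succ hs n, hξ.1 n]
  antitone_sub_succ := by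
    simpa only [tailSum_sub_tailSum_succ hs] using antitone_nat_of_succ_le hξ.2.1
  tendsto := tendsto_tailSum ξ

theorem Antitone.hasSum_sub_succ {R : ℕ → ℝ} (hR : Antitone R) (hlim : Tendsto R atTop (𝓝 0)) :
    HasSum (fun k => R k - R (k + 1)) (R 0) := by
  rw [hasSum_iff_tendsto_nat_of_nonneg fun k => sub_nonneg.2 (hR k.le_succ)]
  simp_rw [Finset.sum_range_sub']
  simpa using tendsto_const_nhds.sub hlim

namespace IsConvexTail

variable {R : ℕ → ℝ}

theorem hasSum_tail_sub_succ (hR : IsConvexTail R) (n : ℕ) :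
    HasSum (fun k => R (n + k) - R (n + k + 1)) (R n) :=
  (hR.antitone.comp_monotone fun _ _ h => Nat.add_le_add_left h n).hasSum_sub_succ
    (by simpa only [add_comm] using hR.tendsto.comp (tendsto_add_atTop_nat n))

theorem tailSum_sub_succ (hR : IsConvexTail R) : tailSum (fun n => R n - R (n + 1)) = R :=
  funext fun n => (hR.hasSum_tail_sub_succ n).tsum_eq

theorem summable_sub_succ (hR : IsConvexTail R) : Summable fun n => R n - R (n + 1) := by
  simpa using (hR.hasSum_tail_sub_succ 0).summable

theorem isC0Star_sub_succ (hR : IsConvexTail R) : IsC0Star fun n => R n - R (n + 1) :=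
  ⟨fun n => sub_nonneg.2 (hR.antitone n.le_succ), fun n => hR.antitone_sub_succ n.le_succ, by
    simpa using hR.tendsto.sub (hR.tendsto.comp (tendsto_add_atTop_nat 1))⟩

theorem sub_mul_le (hR : IsConvexTail R) (n : ℕ) : R 0 - n * (R 0 - R 1) ≤ R n := by
  induction n with
  | zero => simp
  | succ n ih =>
    have := hR.antitone_sub_succ n.zero_le
    push_cast
    linarith

end IsConvexTail

theorem antitone_sub_succ_max {f g : ℕ → ℝ} (hf : Antitone fun n => f n - f (n + 1))
    (hg : Antitone fun n => g n - g (n + 1)) :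
    Antitone fun n => max (f n) (g n) - max (f (n + 1)) (g (n + 1)) := by
  refine antitone_nat_of_succ_le fun n => ?_
  have := hf n.le_succ
  have := hg n.le_succ
  have := le_max_left (f n) (g n)
  have := le_max_right (f n) (g n)
  have := le_max_left (f (n + 2)) (g (n + 2))
  have := le_max_right (f (n + 2)) (g (n + 2))
  rcases max_cases (f (n + 1)) (g (n + 1)) with ⟨h, _⟩ | ⟨h, _⟩ <;> simp only [h] <;> linarith

noncomputable def greedyTail (X d : ℕ → ℝ) : ℕ → ℝ
  | 0 => X 0
  | n + 1 => max (X (n + 1)) (greedyTail X d n - d n)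

section greedyTail

variable {X d : ℕ → ℝ}

theorem le_greedyTail (n : ℕ) : X n ≤ greedyTail X d n := by
  cases n with
  | zero => exact le_rfl
  | succ n => exact le_max_left _ _

theorem greedyTail_sub_succ_le (n : ℕ) : greedyTail X d n - greedyTail X d (n + 1) ≤ d n := by
  have : greedyTail X d n - d n ≤ greedyTail X d (n + 1) := le_max_right _ _
  linarith

theorem greedyTail_le {H : ℕ → ℝ} (hXH : ∀ n, X n ≤ H n) (hd : ∀ n, H n - H (n + 1) ≤ d n)
    (n : ℕ) : greedyTail X d n ≤ H n := by
  induction n with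
  | zero => exact hXH 0
  | succ n ih => exact max_le (hXH _) (by linarith [hd n])

theorem greedyTail_succ_le (hX : Antitone X) (hd : ∀ n, 0 ≤ d n) (n : ℕ) :
    greedyTail X d (n + 1) ≤ greedyTail X d n :=
  max_le ((hX n.le_succ).trans (le_greedyTail n)) (by linarith [hd n])

theorem greedyTail_sub_succ_succ_le (hX : Antitone fun n => X n - X (n + 1)) (hd : Antitone d)
    (n : ℕ) : greedyTail X d (n + 1) - greedyTail X d (n + 2) ≤
      greedyTail X d n - greedyTail X d (n + 1) := by
  rcases max_cases (X (n + 1)) (greedyTail X d n - d n) with ⟨h, _⟩ | ⟨h, _⟩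
  · -- the step `n → n + 1` lands on `X`, so both drops compare with drops of `X`
    have : greedyTail X d (n + 1) = X (n + 1) := h
    linarith [hX n.le_succ, le_greedyTail (X := X) (d := d) n,
      le_greedyTail (X := X) (d := d) (n + 2)]
  · have : greedyTail X d (n + 1) = greedyTail X d n - d n := h
    linarith [hd n.le_succ, greedyTail_sub_succ_le (X := X) (d := d) (n + 1)]

end greedyTail

theorem isConvexTail_greedyTail {X H : ℕ → ℝ} (hX : IsConvexTail X) (hH : IsConvexTail H)
    (hXH : ∀ n, X n ≤ H n) : IsConvexTail (greedyTail X fun n => H n - H (n + 1)) where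
  antitone := antitone_nat_of_succ_le <|
    greedyTail_succ_le hX.antitone fun n => sub_nonneg.2 (hH.antitone n.le_succ)
  antitone_sub_succ := antitone_nat_of_succ_le <|
    greedyTail_sub_succ_succ_le hX.antitone_sub_succ hH.antitone_sub_succ
  tendsto := tendsto_of_tendsto_of_tendsto_of_le_of_le hX.tendsto hH.tendsto le_greedyTail
    (greedyTail_le hXH fun _ => le_rfl)

namespace IsConvexTail

variable {X H : ℕ → ℝ}

theorem exists_ge_with_drops_le (hX : IsConvexTail X) (hH : IsConvexTail H)
    (hXH : ∀ n, X n ≤ H n) :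
    ∃ Z, IsConvexTail Z ∧ (∀ n, X n ≤ Z n) ∧ Z 0 = X 0 ∧
      ∀ n, Z n - Z (n + 1) ≤ H n - H (n + 1) :=
  ⟨_, isConvexTail_greedyTail hX hH hXH, le_greedyTail, rfl, greedyTail_sub_succ_le⟩

theorem exists_le_with_drops_ge (hX : IsConvexTail X) (hH : IsConvexTail H)
    (hXH : ∀ n, X n ≤ H n) :
    ∃ R, IsConvexTail R ∧ (∀ n, R n ≤ H n) ∧ R 0 = H 0 ∧
      ∀ n, X n - X (n + 1) ≤ R n - R (n + 1) := by
  set c := max (X 0 - X 1) (H 0 - H 1)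
  set R : ℕ → ℝ := fun n => max (X n) (H 0 - n * c)
  have hXR (n : ℕ) : X n ≤ R n := le_max_left _ _
  have hRH (n : ℕ) : R n ≤ H n := by
    refine max_le (hXH n) ?_
    have := mul_le_mul_of_nonneg_left (le_max_right (X 0 - X 1) (H 0 - H 1))
      (Nat.cast_nonneg (α := ℝ) n)
    linarith [hH.sub_mul_le n]
  have hdrop (n : ℕ) : X n - X (n + 1) ≤ R n - R (n + 1) := by
    have hXc : X n - X (n + 1) ≤ c := (hX.antitone_sub_succ n.zero_le).trans (le_max_left _ _)
    have : R (n + 1) ≤ R n - (X n - X (n + 1)) := by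
      refine max_le (by linarith [hXR n]) ?_
      push_cast
      linarith [le_max_right (X n) (H 0 - n * c)]
    linarith
  have hline : Antitone fun n : ℕ => (H 0 - n * c) - (H 0 - (n + 1 : ℕ) * c) := by
    intro _ _ _
    push_cast
    linarith
  refine ⟨R, ⟨antitone_nat_of_succ_le fun n => ?_, antitone_sub_succ_max hX.antitone_sub_succ hline,
    tendsto_of_tendsto_of_tendsto_of_le_of_le hX.tendsto hH.tendsto hXR hRH⟩, hRH,
    by simp [R, hXH 0], hdrop⟩
  linarith [hdrop n, hX.antitone n.le_succ]

end IsConvexTail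

theorem stmt_15 (ξ η : ℕ → ℝ) (hξ : IsC0Star ξ) (hη : IsC0Star η)
    (hξs : Summable ξ) (hηs : Summable η) (h : MajInf ξ η) :
    (∃ ζ : ℕ → ℝ, IsC0Star ζ ∧ Summable ζ ∧ MajSInf ξ ζ ∧ ∀ n, ζ n ≤ η n) ∧
    (∃ ρ : ℕ → ℝ, IsC0Star ρ ∧ Summable ρ ∧ (∀ n, ξ n ≤ ρ n) ∧ MajSInf ρ η) := by
  have hX := isConvexTail_tailSum hξ hξs
  have hH := isConvexTail_tailSum hη hηs
  have hXH : ∀ n, tailSum ξ n ≤ tailSum η n := h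
  obtain ⟨Z, hZ, hXZ, hZ0, hZη⟩ := hX.exists_ge_with_drops_le hH hXH
  obtain ⟨R, hR, hRH, hR0, hξR⟩ := hX.exists_le_with_drops_ge hH hXH
  refine ⟨⟨_, hZ.isC0Star_sub_succ, hZ.summable_sub_succ, ⟨fun n => ?_, ?_⟩, fun n => ?_⟩,
    ⟨_, hR.isC0Star_sub_succ, hR.summable_sub_succ, fun n => ?_, ⟨fun n => ?_, ?_⟩⟩⟩
  · exact (hXZ n).trans_eq (congrFun hZ.tailSum_sub_succ n).symm
  · rw [← tailSum_zero, ← tailSum_zero, hZ.tailSum_sub_succ, hZ0]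
  · simpa only [tailSum_sub_tailSum_succ hηs] using hZη n
  · simpa only [tailSum_sub_tailSum_succ hξs] using hξR n
  · exact (congrFun hR.tailSum_sub_succ n).trans_le (hRH n)
  · rw [← tailSum_zero, ← tailSum_zero, hR.tailSum_sub_succ, hR0]
end
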